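/- arXiv:2603.15856 — 6 statements merged into one kernel-verified Lean document; each statement's English description precedes it below -/
import Mathlib

section
/- Let q be a prime power with q odd (i.e. F_q has odd characteristic). For every n ≥ 1, a uniformly random n×n matrix A ∈ F_q^{n×n} satisfies Pr[per(A) = 0] ≥ 1/q. -/
/-! With all rows but the first fixed, the permanent is an additive map `Fⁿ → F` of the first
row, so its kernel has at least `qⁿ⁻¹` elements. Summing over the `q^(n(n-1))` choices of the
remaining rows gives at least `q^(n²-1)` matrices of permanent zero. -/

open Matrix Finset

theorem AddMonoidHom.card_le_card_ker_mul_card {G H : Type*} [AddGroup G] [AddGroup H] [Finite H]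
    (f : G →+ H) : Nat.card G ≤ Nat.card f.ker * Nat.card H := by
  rw [← f.ker.card_mul_index, AddSubgroup.index_ker]
  exact Nat.mul_le_mul_left _ (Nat.card_le_card_of_injective _ Subtype.val_injective)

theorem Fin.card_le_card_subtype_mul_of_forall_cons {V : Type*} [Fintype V] {m k : ℕ}
    (P : (Fin (m + 1) → V) → Prop)
    (h : ∀ B : Fin m → V, Nat.card V ≤ Nat.card {v // P (Fin.cons v B)} * k) :
    Nat.card (Fin (m + 1) → V) ≤ Nat.card {M // P M} * k := by
  have hsplit : {M // P M} ≃ Σ B : Fin m → V, {v // P (Fin.cons v B)} :=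
    ((Fin.consEquiv fun _ ↦ V).symm.subtypeEquiv fun M ↦ by simp).trans
      (((Equiv.prodComm _ _).subtypeEquiv fun _ ↦ Iff.rfl).trans
        (Equiv.subtypeProdEquivSigmaSubtype fun B v ↦ P (Fin.cons v B)))
  calc Nat.card (Fin (m + 1) → V) = ∑ _B : Fin m → V, Nat.card V := by
        rw [Finset.sum_const, card_univ, smul_eq_mul, ← Nat.card_eq_fintype_card,
          Nat.card_congr (Fin.consEquiv fun _ ↦ V).symm, Nat.card_prod, mul_comm]
    _ ≤ ∑ B : Fin m → V, Nat.card {v // P (Fin.cons v B)} * k := sum_le_sum fun B _ ↦ h B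
    _ = Nat.card {M // P M} * k := by rw [← sum_mul, Nat.card_congr hsplit, Nat.card_sigma]

namespace Matrix

section Additivity

variable {n R : Type*} [DecidableEq n] [Fintype n] [CommSemiring R]

theorem permanent_updateCol_add (M : Matrix n n R) (j : n) (u v : n → R) :
    (M.updateCol j (u + v)).permanent =
      (M.updateCol j u).permanent + (M.updateCol j v).permanent := by
  simp only [permanent, ← mul_prod_erase _ _ (mem_univ j), updateCol_self, Pi.add_apply,
    add_mul, sum_add_distrib]
  congr 2 with p <;>
  · rw [Finset.prod_congr rfl fun i hi ↦ updateCol_ne (ne_of_mem_erase hi)]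
    exact congrArg _ (Finset.prod_congr rfl fun i hi ↦ (updateCol_ne (ne_of_mem_erase hi)).symm)

theorem permanent_updateRow_add (M : Matrix n n R) (i : n) (u v : n → R) :
    (M.updateRow i (u + v)).permanent =
      (M.updateRow i u).permanent + (M.updateRow i v).permanent := by
  rw [← permanent_transpose, ← updateCol_transpose, permanent_updateCol_add, updateCol_transpose,
    permanent_transpose, updateCol_transpose, permanent_transpose]

end Additivity

theorem permanent_of_cons_add {R : Type*} [CommSemiring R] {m : ℕ}
    (B : Fin m → Fin (m + 1) → R) (u v : Fin (m + 1) → R) :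
    (of (Fin.cons (u + v) B)).permanent =
      (of (Fin.cons u B)).permanent + (of (Fin.cons v B)).permanent := by
  have hrow (w : Fin (m + 1) → R) : (of (Fin.cons 0 B)).updateRow 0 w = of (Fin.cons w B) := by
    ext i j
    cases i using Fin.cases <;> simp [updateRow_apply]
  simpa only [hrow] using permanent_updateRow_add (of (Fin.cons 0 B)) 0 u v

theorem card_le_card_permanent_of_cons_eq_zero_mul {R : Type*} [CommRing R] [Finite R] {m : ℕ}
    (B : Fin m → Fin (m + 1) → R) :
    Nat.card (Fin (m + 1) → R) ≤
      Nat.card {v // (of (Fin.cons v B)).permanent = 0} * Nat.card R := by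
  let f : (Fin (m + 1) → R) →+ R :=
    AddMonoidHom.mk' (fun v ↦ (of (Fin.cons v B)).permanent) (permanent_of_cons_add B)
  have hker : Nat.card f.ker = Nat.card {v // (of (Fin.cons v B)).permanent = 0} :=
    Nat.card_congr (Equiv.subtypeEquivRight fun _ ↦ f.mem_ker)
  exact hker ▸ f.card_le_card_ker_mul_card

theorem card_le_card_permanent_eq_zero_mul {R : Type*} [CommRing R] [Fintype R] (m : ℕ) :
    Nat.card R ^ (m + 1) ^ 2 ≤
      Nat.card {A : Matrix (Fin (m + 1)) (Fin (m + 1)) R // A.permanent = 0} * Nat.card R := by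
  have hcard : Nat.card (Fin (m + 1) → Fin (m + 1) → R) = Nat.card R ^ (m + 1) ^ 2 := by
    rw [Nat.card_fun, Nat.card_fun, Nat.card_fin, ← pow_mul, sq]
  rw [← hcard]
  exact Fin.card_le_card_subtype_mul_of_forall_cons (fun A ↦ (of A).permanent = 0)
    card_le_card_permanent_of_cons_eq_zero_mul

end Matrix

theorem permanent_zero_probability_lower_bound_general (F : Type*) [Field F] [Fintype F]
    (n : ℕ) (hn : 1 ≤ n) :
    (1 : ℝ) / (Fintype.card F : ℝ) ≤
      (Nat.card {A : Matrix (Fin n) (Fin n) F // A.permanent = 0} : ℝ) /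
        (Fintype.card F : ℝ) ^ (n ^ 2) := by
  obtain ⟨m, rfl⟩ := Nat.exists_eq_add_of_le' hn
  have hq : (0 : ℝ) < Fintype.card F := by exact_mod_cast Fintype.card_pos
  rw [div_le_div_iff₀ hq (by positivity), one_mul, ← Nat.card_eq_fintype_card]
  exact_mod_cast card_le_card_permanent_eq_zero_mul (R := F) m

/-- For a finite field `F` of odd characteristic (i.e. odd order `q`) and any `n ≥ 1`,
a uniformly random `n × n` matrix over `F` satisfies `Pr[per A = 0] ≥ 1/q`. -/
theorem permanent_zero_probability_lower_bound (F : Type*) [Field F] [Fintype F]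
    (hodd : Odd (Fintype.card F)) (n : ℕ) (hn : 1 ≤ n) :
    (1 : ℝ) / (Fintype.card F : ℝ) ≤
      (Nat.card {A : Matrix (Fin n) (Fin n) F // A.permanent = 0} : ℝ) /
        (Fintype.card F : ℝ) ^ (n ^ 2) :=
  permanent_zero_probability_lower_bound_general F n hn
end

section
/- Let q be a prime power, let n ≥ 1 and let s ∈ {1,…,n}. Let B ∈ F_q^{(n−s)×n} be a fixed matrix that contains an (n−s)×(n−s) submatrix (obtained by selecting n−s of its columns) with nonzero permanent. Let x ∈ F_q^n be a uniformly random vector, and let B′ ∈ F_q^{(n−s+1)×n} be the matrix obtained from B by appending x as an additional last row. Then the probability that B′ contains an (n−s+1)×(n−s+1) submatrix (obtained by selecting n−s+1 of its columns) with nonzero permanent is at least 1 − q^{-s}. -/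
open Finset


lemma decomposeFin_fst {m : ℕ} (σ : Equiv.Perm (Fin (m+1))) :
    (Equiv.Perm.decomposeFin σ).1 = σ 0 := by
  conv_rhs => rw [← Equiv.symm_apply_apply Equiv.Perm.decomposeFin σ,
    ← Prod.mk.eta (p := Equiv.Perm.decomposeFin σ)]
  exact (Equiv.Perm.decomposeFin_symm_apply_zero _ _).symm

lemma decomposeFin_recompose {m : ℕ} {σ : Equiv.Perm (Fin (m+1))} (hσ : σ 0 = 0) :
    Equiv.Perm.decomposeFin.symm (0, (Equiv.Perm.decomposeFin σ).2) = σ := by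
  conv_lhs => rw [← hσ, ← decomposeFin_fst, Prod.mk.eta, Equiv.symm_apply_apply]

lemma perm_sum_fix_zero' {R : Type*} [CommSemiring R] {m : ℕ}
    (A : Matrix (Fin (m+1)) (Fin (m+1)) R) :
    ∑ σ ∈ Finset.univ.filter (fun σ : Equiv.Perm (Fin (m+1)) => σ 0 = 0),
      ∏ i, A (σ i) i = A 0 0 * (A.submatrix Fin.succ Fin.succ).permanent := by
  rw [Matrix.permanent, Finset.mul_sum]
  refine Finset.sum_nbij' (fun σ => (Equiv.Perm.decomposeFin σ).2)
    (fun τ => Equiv.Perm.decomposeFin.symm (0, τ)) ?_ ?_ ?_ ?_ ?_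
  · intro σ hσ; exact Finset.mem_univ _
  · intro τ _
    simp [Equiv.Perm.decomposeFin_symm_apply_zero]
  · intro σ hσ
    simp only [Finset.mem_filter, Finset.mem_univ, true_and] at hσ
    exact decomposeFin_recompose hσ
  · intro τ _
    simp
  · intro σ hσ
    simp only [Finset.mem_filter, Finset.mem_univ, true_and] at hσ
    conv_lhs => rw [← decomposeFin_recompose hσ]
    rw [Fin.prod_univ_succ]
    simp [Equiv.Perm.decomposeFin_symm_apply_zero, Equiv.Perm.decomposeFin_symm_apply_succ, hσ]

lemma permanent_sub_single_entry {R : Type*} [CommRing R] {m : ℕ}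
    (M N : Matrix (Fin (m+1)) (Fin (m+1)) R)
    (h : ∀ i j : Fin (m+1), (i ≠ 0 ∨ j ≠ 0) → M i j = N i j) :
    M.permanent - N.permanent
      = (M 0 0 - N 0 0) * (M.submatrix Fin.succ Fin.succ).permanent := by
  have hsub : N.submatrix Fin.succ Fin.succ = M.submatrix Fin.succ Fin.succ := by
    ext i j
    exact (h _ _ (Or.inl (Fin.succ_ne_zero i))).symm
  have hM : M.permanent = M 0 0 * (M.submatrix Fin.succ Fin.succ).permanent
      + ∑ σ ∈ Finset.univ.filter (fun σ : Equiv.Perm (Fin (m+1)) => ¬ σ 0 = 0),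
        ∏ i, M (σ i) i := by
    rw [Matrix.permanent, ← Finset.sum_filter_add_sum_filter_not Finset.univ
      (fun σ : Equiv.Perm (Fin (m+1)) => σ 0 = 0), perm_sum_fix_zero']
  have hN : N.permanent = N 0 0 * (M.submatrix Fin.succ Fin.succ).permanent
      + ∑ σ ∈ Finset.univ.filter (fun σ : Equiv.Perm (Fin (m+1)) => ¬ σ 0 = 0),
        ∏ i, N (σ i) i := by
    rw [Matrix.permanent, ← Finset.sum_filter_add_sum_filter_not Finset.univ
      (fun σ : Equiv.Perm (Fin (m+1)) => σ 0 = 0), perm_sum_fix_zero', hsub]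
  have hrest : ∀ σ ∈ Finset.univ.filter (fun σ : Equiv.Perm (Fin (m+1)) => ¬ σ 0 = 0),
      ∏ i, M (σ i) i = ∏ i, N (σ i) i := by
    intro σ hσ
    simp only [Finset.mem_filter, Finset.mem_univ, true_and] at hσ
    refine Finset.prod_congr rfl fun i _ => ?_
    rcases eq_or_ne i 0 with rfl | hi
    · exact h _ _ (Or.inl hσ)
    · exact h _ _ (Or.inr hi)
  rw [hM, hN, Finset.sum_congr rfl hrest]
  ring

lemma snoc_injective {α : Type*} {m : ℕ} {g : Fin m → α} (hg : Function.Injective g)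
    {c : α} (hc : c ∉ Set.range g) : Function.Injective (Fin.snoc g c : Fin (m+1) → α) := by
  intro a b hab
  induction a using Fin.lastCases with
  | last =>
    induction b using Fin.lastCases with
    | last => rfl
    | cast b =>
      rw [Fin.snoc_last, Fin.snoc_castSucc] at hab
      exact absurd ⟨b, hab.symm⟩ hc
  | cast a =>
    induction b using Fin.lastCases with
    | last =>
      rw [Fin.snoc_last, Fin.snoc_castSucc] at hab
      exact absurd ⟨a, hab⟩ hc
    | cast b =>
      rw [Fin.snoc_castSucc, Fin.snoc_castSucc] at hab
      rw [hg hab]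

/-- Let `B` be a fixed `(n-s) × n` matrix over a finite field `F` with `q` elements, containing
an `(n-s) × (n-s)` submatrix (given by an injective choice of `n - s` columns) with nonzero
permanent. Appending a uniformly random row `x ∈ Fⁿ` to `B`, with probability at least
`1 - q^{-s}` the resulting `(n-s+1) × n` matrix contains an `(n-s+1) × (n-s+1)` submatrix with
nonzero permanent. -/
theorem nonzero_permanent_submatrix_growth_step_uniform (F : Type*) [Field F] [Fintype F]
    (n s : ℕ) (hs : 1 ≤ s) (hsn : s ≤ n)
    (B : Matrix (Fin (n - s)) (Fin n) F)
    (hB : ∃ g : Fin (n - s) → Fin n, Function.Injective g ∧ (B.submatrix id g).permanent ≠ 0) :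
    (1 : ℝ) - ((Fintype.card F : ℝ))⁻¹ ^ s ≤
      (Nat.card {x : Fin n → F //
          ∃ g : Fin (n - s + 1) → Fin n, Function.Injective g ∧
            ((Matrix.of (Fin.snoc (fun i => B i) x)).submatrix id g).permanent ≠ 0} : ℝ) /
        (Fintype.card F : ℝ) ^ n := by
  classical
  obtain ⟨g, hginj, hgP⟩ := hB
  have hq1 : 1 ≤ Fintype.card F := Fintype.card_pos
  set Mat : (Fin n → F) → Fin n → Matrix (Fin (n - s + 1)) (Fin (n - s + 1)) F :=
    fun x c => (Matrix.of (Fin.snoc (fun i => B i) x)).submatrix id (Fin.snoc g c) with hMat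
  set P : (Fin n → F) → Prop := fun x =>
    ∃ g' : Fin (n - s + 1) → Fin n, Function.Injective g' ∧
      ((Matrix.of (Fin.snoc (fun i => B i) x)).submatrix id g').permanent ≠ 0 with hP
  have step2 : ∀ x : Fin n → F, ¬ P x → ∀ c, c ∉ Set.range g → (Mat x c).permanent = 0 := by
    intro x hx c hc
    by_contra h
    exact hx ⟨Fin.snoc g c, snoc_injective hginj hc, h⟩
  set e : Equiv.Perm (Fin (n - s + 1)) := (finRotate (n - s + 1)).symm with he
  have he0 : e 0 = Fin.last (n - s) := by
    rw [he, Equiv.symm_apply_eq, finRotate_last]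
  have heS : ∀ i : Fin (n - s), e i.succ = i.castSucc := by
    intro i
    rw [he, Equiv.symm_apply_eq, finRotate_succ_apply, Fin.coeSucc_eq_succ]
  have step3 : ∀ (x y : Fin n → F) (c : Fin n), c ∉ Set.range g → x ∘ g = y ∘ g →
      (Mat x c).permanent - (Mat y c).permanent
        = (x c - y c) * (B.submatrix id g).permanent := by
    intro x y c hc hxy
    have hperm : ∀ z : Fin n → F,
        ((Mat z c).submatrix e e).permanent = (Mat z c).permanent := by
      intro z
      have : (Mat z c).submatrix e e = ((Mat z c).submatrix id e).submatrix e id := by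
        rw [Matrix.submatrix_submatrix]; rfl
      rw [this, Matrix.permanent_permute_cols, Matrix.permanent_permute_rows]
    have hentry : ∀ i j : Fin (n - s + 1), (i ≠ 0 ∨ j ≠ 0) →
        ((Mat x c).submatrix e e) i j = ((Mat y c).submatrix e e) i j := by
      intro i j hij
      induction i using Fin.cases with
      | zero =>
        rcases hij with hi | hj
        · exact absurd rfl hi
        · induction j using Fin.cases with
          | zero => exact absurd rfl hj
          | succ j =>
            simp only [Matrix.submatrix_apply, he0, heS, hMat, id_eq, Matrix.of_apply,
              Fin.snoc_last, Fin.snoc_castSucc]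
            exact congrFun hxy j
      | succ i =>
        simp only [Matrix.submatrix_apply, heS, hMat, id_eq, Matrix.of_apply,
          Fin.snoc_castSucc]
    have hminor : ((Mat x c).submatrix e e).submatrix Fin.succ Fin.succ
        = B.submatrix id g := by
      ext i j
      simp only [Matrix.submatrix_apply, heS, hMat, id_eq, Matrix.of_apply,
        Fin.snoc_castSucc]
    have h00x : ((Mat x c).submatrix e e) 0 0 = x c := by
      simp only [Matrix.submatrix_apply, he0, hMat, id_eq, Matrix.of_apply,
        Fin.snoc_last]
    have h00y : ((Mat y c).submatrix e e) 0 0 = y c := by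
      simp only [Matrix.submatrix_apply, he0, hMat, id_eq, Matrix.of_apply,
        Fin.snoc_last]
    have hd := permanent_sub_single_entry ((Mat x c).submatrix e e) ((Mat y c).submatrix e e)
      hentry
    rw [hperm, hperm, hminor, h00x, h00y] at hd
    exact hd
  set Bad : Finset (Fin n → F) := Finset.univ.filter (fun x => ¬ P x) with hBad
  have badcard : Bad.card ≤ Fintype.card F ^ (n - s) := by
    have h1 : Bad.card ≤ (Finset.univ : Finset (Fin (n - s) → F)).card := by
      apply Finset.card_le_card_of_injOn (fun x => x ∘ g)
      · intro _ _; exact Finset.mem_univ _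
      · intro x hx y hy hxy
        simp only [hBad, Finset.coe_filter, Set.mem_setOf_eq, Finset.mem_univ, true_and] at hx hy
        funext c
        by_cases hc : c ∈ Set.range g
        · obtain ⟨i, rfl⟩ := hc
          exact congrFun hxy i
        · have hx0 := step2 x hx c hc
          have hy0 := step2 y hy c hc
          have h3 := step3 x y c hc hxy
          rw [hx0, hy0, sub_self] at h3
          exact sub_eq_zero.mp ((mul_eq_zero.mp h3.symm).resolve_right hgP)
    simpa [Finset.card_univ] using h1
  have goodcard : (Finset.univ.filter P).card = Fintype.card F ^ n - Bad.card := by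
    have h2 := Finset.card_filter_add_card_filter_not
      (s := (Finset.univ : Finset (Fin n → F))) (p := P)
    rw [Finset.card_univ] at h2
    simp only [Fintype.card_pi, Finset.prod_const, Finset.card_univ, Fintype.card_fin] at h2
    rw [hBad]
    omega
  have badle : Bad.card ≤ Fintype.card F ^ n :=
    badcard.trans (Nat.pow_le_pow_right (by omega) (by omega))
  have hNat : Nat.card {x : Fin n → F // P x} = (Finset.univ.filter P).card := by
    rw [Nat.card_eq_fintype_card, Fintype.card_subtype]
  have hqpos : (0 : ℝ) < (Fintype.card F : ℝ) := by exact_mod_cast hq1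
  have hqnpos : (0 : ℝ) < (Fintype.card F : ℝ) ^ n := pow_pos hqpos n
  have hG : (Fintype.card F : ℝ) ^ n - (Fintype.card F : ℝ) ^ (n - s)
      ≤ ((Finset.univ.filter P).card : ℝ) := by
    have : ((Finset.univ.filter P).card : ℝ)
        = (Fintype.card F : ℝ) ^ n - (Bad.card : ℝ) := by
      rw [goodcard, Nat.cast_sub badle]
      push_cast
      ring
    rw [this]
    have : (Bad.card : ℝ) ≤ (Fintype.card F : ℝ) ^ (n - s) := by exact_mod_cast badcard
    linarith
  rw [hNat, le_div_iff₀ hqnpos]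
  have hkey : (Fintype.card F : ℝ) ^ (n - s)
      = (Fintype.card F : ℝ)⁻¹ ^ s * (Fintype.card F : ℝ) ^ n := by
    rw [pow_sub₀ _ (ne_of_gt hqpos) hsn, inv_pow]; ring
  calc (1 - (Fintype.card F : ℝ)⁻¹ ^ s) * (Fintype.card F : ℝ) ^ n
      = (Fintype.card F : ℝ) ^ n - (Fintype.card F : ℝ) ^ (n - s) := by rw [hkey]; ring
    _ ≤ ((Finset.univ.filter P).card : ℝ) := hG
end

section
/- Let q be a prime power and let n ≥ 1. For a uniformly random n×n matrix A ∈ F_q^{n×n}, we have Pr[per(A) = 0] ≤ 1 − ∏_{i=1}^{n} (1 − q^{-i}) ≤ α_q. -/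
/-!
A `k × n` matrix has full permanent rank if some `k` of its columns form a square submatrix with
nonzero permanent. Let `B` have full permanent rank via the columns `e`, and extend it by a new top
row. Expanding the permanent of the minor on the columns `j, e` along the new row shows that two
new rows `x, y` which agree on `e` and both lose full permanent rank satisfy
`(x j - y j) * per (B_e) = 0` for every `j`; such a row is therefore determined by `x ∘ e`, so at
most `q ^ k` of the `q ^ n` extensions lose full rank. Inductively at least
`∏_{k < n} (q ^ n - q ^ k) = q ^ (n²) ∏_{i=1}^{n} (1 - q⁻ⁱ)` square matrices have nonzero
permanent. The comparison with `α_q` holds because the partial products of `∏ (1 - q⁻ⁱ)` decrease.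
-/

open Finset Equiv

namespace Matrix

theorem permanent_succ_column_zero {R : Type*} [CommSemiring R] {n : ℕ}
    (A : Matrix (Fin (n + 1)) (Fin (n + 1)) R) :
    A.permanent = ∑ i, A i 0 * (A.submatrix i.succAbove Fin.succ).permanent := by
  rw [permanent, ← Equiv.sum_comp Perm.decomposeFin.symm, Fintype.sum_prod_type]
  refine sum_congr rfl fun p _ => ?_
  simp only [Fin.prod_univ_succ, Perm.decomposeFin_symm_apply_zero,
    Perm.decomposeFin_symm_apply_succ, ← mul_sum]
  congr 1
  cases p using Fin.cases with
  | zero => simp [permanent]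
  | succ i =>
    rw [← permanent_permute_cols i.cycleRange]
    simp [permanent, Fin.succAbove_cycleRange]

theorem permanent_succ_row_zero {R : Type*} [CommSemiring R] {n : ℕ}
    (A : Matrix (Fin (n + 1)) (Fin (n + 1)) R) :
    A.permanent = ∑ j, A 0 j * (A.submatrix Fin.succ j.succAbove).permanent := by
  rw [← permanent_transpose, permanent_succ_column_zero]
  simp [← permanent_transpose (A.submatrix _ _)]

section ConsRow

variable {ι R : Type*} {k : ℕ}

def consRow (x : ι → R) (B : Matrix (Fin k) ι R) : Matrix (Fin (k + 1)) ι R :=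
  of (Fin.cons x fun i => B i)

@[simp] theorem consRow_zero (x : ι → R) (B : Matrix (Fin k) ι R) : consRow x B 0 = x := rfl

def consRowEquiv : (ι → R) × Matrix (Fin k) ι R ≃ Matrix (Fin (k + 1)) ι R where
  toFun p := consRow p.1 p.2
  invFun C := (C 0, C.submatrix Fin.succ id)
  left_inv _ := rfl
  right_inv C := by ext i j; cases i using Fin.cases <;> rfl

theorem permanent_consRow_submatrix_sub [CommRing R] (B : Matrix (Fin k) ι R) {x y : ι → R}
    (j : ι) (e : Fin k → ι) (hxy : ∀ i, x (e i) = y (e i)) :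
    ((consRow x B).submatrix id (Fin.cons j e)).permanent
        - ((consRow y B).submatrix id (Fin.cons j e)).permanent
      = (x j - y j) * (B.submatrix id e).permanent := by
  have hminor : ∀ (z : ι → R) (l : Fin (k + 1)),
      ((consRow z B).submatrix id (Fin.cons j e)).submatrix Fin.succ l.succAbove
        = B.submatrix id (Fin.cons j e ∘ l.succAbove) := fun _ _ => rfl
  have hminor_zero : Fin.cons j e ∘ (0 : Fin (k + 1)).succAbove = e := rfl
  rw [permanent_succ_row_zero, permanent_succ_row_zero, Fin.sum_univ_succ, Fin.sum_univ_succ]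
  simp only [hminor, hminor_zero, submatrix_apply, id, consRow_zero, Fin.cons_zero,
    Fin.cons_succ, hxy]
  ring

end ConsRow

section FullPermanentRank

variable {ι R : Type*} [CommSemiring R]

def HasFullPermanentRank {k : ℕ} (B : Matrix (Fin k) ι R) : Prop :=
  ∃ e : Fin k ↪ ι, (B.submatrix id e).permanent ≠ 0

theorem hasFullPermanentRank_fin_zero [Nontrivial R] (B : Matrix (Fin 0) ι R) :
    B.HasFullPermanentRank :=
  ⟨Function.Embedding.ofIsEmpty, by simp [permanent_isEmpty]⟩

theorem hasFullPermanentRank_iff_permanent_ne_zero {n : ℕ} (A : Matrix (Fin n) (Fin n) R) :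
    A.HasFullPermanentRank ↔ A.permanent ≠ 0 := by
  refine ⟨fun ⟨e, he⟩ => ?_, fun h => ⟨Function.Embedding.refl _, h⟩⟩
  rwa [← permanent_permute_rows
    (Equiv.ofBijective e (Finite.injective_iff_bijective.mp e.injective))]

end FullPermanentRank

section Counting

open scoped Classical

variable {ι F : Type*} [Fintype ι] [DecidableEq ι] [Field F] [Fintype F] {k : ℕ}

theorem card_not_hasFullPermanentRank_consRow_le {B : Matrix (Fin k) ι F}
    (hB : B.HasFullPermanentRank) :
    #{x : ι → F | ¬(consRow x B).HasFullPermanentRank} ≤ Fintype.card F ^ k := by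
  obtain ⟨e, he⟩ := hB
  calc _ ≤ #(univ : Finset (Fin k → F)) :=
        card_le_card_of_injOn (fun x => x ∘ e) (fun _ _ => mem_univ _) ?_
    _ = Fintype.card F ^ k := by simp
  intro x hx y hy hxy
  ext j
  by_cases hj : j ∈ Set.range e
  · obtain ⟨i, rfl⟩ := hj
    exact congrFun hxy i
  have hzero : ∀ z : ι → F, ¬(consRow z B).HasFullPermanentRank →
      ((consRow z B).submatrix id (Fin.cons j e)).permanent = 0 := fun z hz => by
    by_contra h
    exact hz ⟨⟨_, Fin.cons_injective_of_injective hj e.injective⟩, h⟩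
  have hdiff := permanent_consRow_submatrix_sub B j e (congrFun hxy)
  rw [hzero x (by simpa using hx), hzero y (by simpa using hy), sub_zero, eq_comm] at hdiff
  exact sub_eq_zero.mp ((mul_eq_zero.mp hdiff).resolve_right he)

theorem card_sub_pow_le_card_hasFullPermanentRank_consRow {B : Matrix (Fin k) ι F}
    (hB : B.HasFullPermanentRank) :
    Fintype.card F ^ Fintype.card ι - Fintype.card F ^ k
      ≤ #{x : ι → F | (consRow x B).HasFullPermanentRank} := by
  have htotal := card_filter_add_card_filter_not (s := univ)
    fun x : ι → F => (consRow x B).HasFullPermanentRank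
  have hbad := card_not_hasFullPermanentRank_consRow_le hB
  simp only [card_univ, Fintype.card_fun] at htotal
  omega

theorem card_hasFullPermanentRank_mul_le_succ :
    #{B : Matrix (Fin k) ι F | B.HasFullPermanentRank}
        * (Fintype.card F ^ Fintype.card ι - Fintype.card F ^ k)
      ≤ #{C : Matrix (Fin (k + 1)) ι F | C.HasFullPermanentRank} := by
  have hsplit : #{C : Matrix (Fin (k + 1)) ι F | C.HasFullPermanentRank}
      = ∑ B : Matrix (Fin k) ι F, #{x : ι → F | (consRow x B).HasFullPermanentRank} :=
    calc #{C : Matrix (Fin (k + 1)) ι F | C.HasFullPermanentRank}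
        = #{p : (ι → F) × Matrix (Fin k) ι F | (consRow p.1 p.2).HasFullPermanentRank} :=
          (card_equiv consRowEquiv fun _ => by simp only [mem_filter, mem_univ, true_and]; rfl).symm
      _ = _ := by simp only [card_filter, Fintype.sum_prod_type_right]
  rw [hsplit, ← smul_eq_mul, ← sum_const]
  exact (sum_le_sum fun B hB => card_sub_pow_le_card_hasFullPermanentRank_consRow
    (mem_filter.mp hB).2).trans (sum_le_sum_of_subset (filter_subset _ _))

theorem prod_pow_sub_pow_le_card_hasFullPermanentRank :
    ∏ i ∈ range k, (Fintype.card F ^ Fintype.card ι - Fintype.card F ^ i)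
      ≤ #{B : Matrix (Fin k) ι F | B.HasFullPermanentRank} := by
  induction k with
  | zero =>
    exact one_le_card.mpr ⟨0, mem_filter.mpr ⟨mem_univ _, hasFullPermanentRank_fin_zero 0⟩⟩
  | succ k ih =>
    rw [prod_range_succ]
    exact (Nat.mul_le_mul_right _ ih).trans card_hasFullPermanentRank_mul_le_succ

theorem card_permanent_eq_zero_add_prod_le (n : ℕ) :
    #{A : Matrix (Fin n) (Fin n) F | A.permanent = 0}
        + ∏ i ∈ range n, (Fintype.card F ^ n - Fintype.card F ^ i)
      ≤ Fintype.card F ^ (n ^ 2) := by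
  have hcount := prod_pow_sub_pow_le_card_hasFullPermanentRank (F := F) (ι := Fin n) (k := n)
  have htotal := card_filter_add_card_filter_not (s := univ)
    fun A : Matrix (Fin n) (Fin n) F => A.HasFullPermanentRank
  have hzero : #{A : Matrix (Fin n) (Fin n) F | ¬A.HasFullPermanentRank}
      = #{A : Matrix (Fin n) (Fin n) F | A.permanent = 0} := by
    congr 1
    exact filter_congr fun A _ => by rw [hasFullPermanentRank_iff_permanent_ne_zero, not_not]
  have hmatrices : #(univ : Finset (Matrix (Fin n) (Fin n) F)) = Fintype.card F ^ (n ^ 2) := by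
    rw [card_univ, Fintype.card_eq_nat_card]
    simp [Matrix, sq, pow_mul]
  rw [Fintype.card_fin] at hcount
  omega

end Counting

end Matrix

theorem prod_range_pow_sub_pow {K : Type*} [Field K] {q : K} (hq : q ≠ 0) (n : ℕ) :
    ∏ i ∈ range n, (q ^ n - q ^ i) = q ^ (n ^ 2) * ∏ i ∈ range n, (1 - q⁻¹ ^ (i + 1)) :=
  calc ∏ i ∈ range n, (q ^ n - q ^ i) = ∏ i ∈ range n, (q ^ n - q ^ (n - 1 - i)) :=
        (prod_range_reflect _ n).symm
    _ = ∏ i ∈ range n, q ^ n * (1 - q⁻¹ ^ (i + 1)) := prod_congr rfl fun i hi => by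
        have hsplit : q ^ n = q ^ (i + 1) * q ^ (n - 1 - i) := by
          rw [← pow_add]; congr 1; have := mem_range.mp hi; omega
        rw [mul_sub, mul_one, hsplit, inv_pow, mul_right_comm,
          mul_inv_cancel₀ (pow_ne_zero _ hq), one_mul]
    _ = q ^ (n ^ 2) * ∏ i ∈ range n, (1 - q⁻¹ ^ (i + 1)) := by
        rw [prod_mul_distrib, prod_const, card_range, ← pow_mul, sq]

theorem Nat.cast_prod_range_pow_sub_pow {K : Type*} [CommRing K] {q : ℕ} (hq : 1 ≤ q) (n : ℕ) :
    ((∏ i ∈ range n, (q ^ n - q ^ i) : ℕ) : K) = ∏ i ∈ range n, ((q : K) ^ n - q ^ i) := by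
  rw [Nat.cast_prod]
  refine prod_congr rfl fun i hi => ?_
  rw [Nat.cast_sub (Nat.pow_le_pow_right hq (mem_range.mp hi).le), Nat.cast_pow, Nat.cast_pow]

theorem Real.tprod_le_prod_of_nonneg_of_le_one {ι : Type*} {f : ι → ℝ} (h0 : ∀ i, 0 ≤ f i)
    (h1 : ∀ i, f i ≤ 1) (s : Finset ι) : ∏' i, f i ≤ ∏ i ∈ s, f i := by
  have hbdd : BddBelow (Set.range fun s : Finset ι => ∏ i ∈ s, f i) :=
    ⟨0, by rintro _ ⟨s, rfl⟩; exact prod_nonneg fun i _ => h0 i⟩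
  have hf : HasProd f (⨅ s : Finset ι, ∏ i ∈ s, f i) :=
    tendsto_atTop_ciInf (prod_anti_set_of_le_one h0 h1) hbdd
  rw [hf.tprod_eq]
  exact ciInf_le hbdd s

theorem permanent_zero_probability_le_alpha_general (F : Type*) [Field F] [Fintype F]
    (n : ℕ) :
    (Nat.card {A : Matrix (Fin n) (Fin n) F // A.permanent = 0} : ℝ) /
        (Fintype.card F : ℝ) ^ (n ^ 2)
      ≤ 1 - ∏ i ∈ Finset.Icc 1 n, (1 - ((Fintype.card F : ℝ))⁻¹ ^ i) ∧
    1 - ∏ i ∈ Finset.Icc 1 n, (1 - ((Fintype.card F : ℝ))⁻¹ ^ i)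
      ≤ 1 - ∏' i : ℕ, (1 - ((Fintype.card F : ℝ))⁻¹ ^ (i + 1)) := by
  classical
  set q := Fintype.card F
  have hq : 1 ≤ q := Fintype.card_pos
  have hqR : (1 : ℝ) ≤ q := by exact_mod_cast hq
  have hIcc : ∏ i ∈ Icc 1 n, (1 - (q : ℝ)⁻¹ ^ i)
      = ∏ i ∈ range n, (1 - (q : ℝ)⁻¹ ^ (i + 1)) := by
    rw [range_eq_Ico, prod_Ico_add' (fun i => 1 - (q : ℝ)⁻¹ ^ i), zero_add,
      Ico_add_one_right_eq_Icc]
  rw [hIcc]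
  refine ⟨?_, sub_le_sub_left (Real.tprod_le_prod_of_nonneg_of_le_one
    (fun i => sub_nonneg.mpr (pow_le_one₀ (by positivity) (inv_le_one_of_one_le₀ hqR)))
    (fun i => sub_le_self _ (by positivity)) _) 1⟩
  have hcount : (#{A : Matrix (Fin n) (Fin n) F | A.permanent = 0} : ℝ)
      + q ^ (n ^ 2) * ∏ i ∈ range n, (1 - (q : ℝ)⁻¹ ^ (i + 1)) ≤ q ^ (n ^ 2) := by
    rw [← prod_range_pow_sub_pow (by positivity), ← Nat.cast_prod_range_pow_sub_pow hq]
    exact_mod_cast Matrix.card_permanent_eq_zero_add_prod_le n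
  rw [Nat.card_eq_fintype_card, Fintype.card_subtype, div_le_iff₀ (by positivity)]
  linarith

/-- For a uniformly random `n × n` matrix `A` over a finite field `F` with `q` elements (`n ≥ 1`),
`Pr[per A = 0] ≤ 1 - ∏_{i=1}^{n} (1 - q^{-i}) ≤ α_q`, where `α_q = 1 - ∏_{i=1}^∞ (1 - q⁻ⁱ)`. -/
theorem permanent_zero_probability_le_alpha (F : Type*) [Field F] [Fintype F]
    (n : ℕ) (hn : 1 ≤ n) :
    (Nat.card {A : Matrix (Fin n) (Fin n) F // A.permanent = 0} : ℝ) /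
        (Fintype.card F : ℝ) ^ (n ^ 2)
      ≤ 1 - ∏ i ∈ Finset.Icc 1 n, (1 - ((Fintype.card F : ℝ))⁻¹ ^ i) ∧
    1 - ∏ i ∈ Finset.Icc 1 n, (1 - ((Fintype.card F : ℝ))⁻¹ ^ i)
      ≤ 1 - ∏' i : ℕ, (1 - ((Fintype.card F : ℝ))⁻¹ ^ (i + 1)) :=
  permanent_zero_probability_le_alpha_general F n
end

section
/- Let p ≥ 3 be a prime and let μ be a probability distribution on F_p supported on more than one value. For any s ≥ 1, ℓ ≥ 1 and ε > 0, there exist L ∈ ℕ and N ∈ ℕ such that the following holds for all n ≥ N. Let B ∈ F_p^{(n−s)×n} be a fixed matrix for which there exist L pairwise disjoint sets I_1,…,I_L ⊆ {1,…,n}, each of size s, such that for each i the (n−s)×(n−s) matrix obtained from B by deleting the columns indexed by I_i has nonzero permanent. Let x ∈ F_p^n be a random vector with independent μ-distributed entries, and let B′ ∈ F_p^{(n−s+1)×n} be the matrix obtained from B by appending x as an additional last row. Then, with probability at least 1 − p^{-s} − ε, there exist ℓ pairwise disjoint sets J_1,…,J_ℓ ⊆ {1,…,n}, each of size s−1, such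 that for each j the (n−s+1)×(n−s+1) matrix obtained from B′ by deleting the columns indexed by J_j has nonzero permanent. -/
/-!
Deleting from `B'` the set `I_i ∖ {c}` leaves a minor whose permanent, expanded along the new
row, is `f_{i,c} ⬝ᵥ x` for a vector `f_{i,c}` of `(n - s)`-minors of `B`; restricted to `I_i`,
these vectors are `per (B ∖ I_i) ≠ 0` times the standard basis. So block `i` is useless only if
the `s` forms `f_{i,c} ⬝ᵥ x`, `c ∈ I_i`, all vanish. Among any `k = r p^{s²}` blocks, a suitable
combination of their forms (pigeonhole over all combinations) gives `s` forms `U x` every nonzero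
combination of which has support at least `r`, and Fourier analysis bounds
`P(U x = 0) ≤ p^{-s} + ρ^r` with `ρ = max_{c ≠ 0} ‖charSum μ c‖ < 1`. Markov's inequality for
`C(#useless blocks, k)` then shows that more than `L - ℓ` blocks are useless with probability at
most `p^{-s} + ε` once `L` is large.
-/

open scoped Classical

open Finset Matrix Filter Topology

section Permanent

variable {R : Type*} [CommSemiring R]

theorem Matrix.permanent_succ_column_zero_s11 {m : ℕ} (M : Matrix (Fin (m + 1)) (Fin (m + 1)) R) :
    M.permanent = ∑ j, M j 0 * (M.submatrix j.succAbove Fin.succ).permanent := by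
  rw [permanent, univ_perm_fin_succ, ← univ_product_univ, sum_map, sum_product]
  refine sum_congr rfl fun j _ => ?_
  rw [permanent, mul_sum]
  induction j using Fin.cases with
  | zero =>
    refine sum_congr rfl fun τ _ => ?_
    simp [Fin.prod_univ_succ]
  | succ j =>
    -- `decomposeFin.symm (j.succ, τ)` agrees with `j.cycleRange * τ` after deleting row `j.succ`
    refine Fintype.sum_bijective (j.cycleRange * ·) (Group.mulLeft_bijective _) _ _ fun τ => ?_
    rw [Fin.prod_univ_succ]
    simp only [Equiv.toEmbedding_apply, Equiv.Perm.decomposeFin_symm_apply_zero,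
      Equiv.Perm.decomposeFin_symm_apply_succ, submatrix_apply, Equiv.Perm.mul_apply,
      Fin.succAbove_cycleRange]

theorem Matrix.permanent_succ_row_last {m : ℕ} (M : Matrix (Fin (m + 1)) (Fin (m + 1)) R) :
    M.permanent = ∑ j, M (Fin.last m) j * (M.submatrix Fin.castSucc j.succAbove).permanent := by
  rw [← permanent_transpose, ← permanent_permute_rows Fin.revPerm, permanent_succ_column_zero_s11]
  refine sum_congr rfl fun j _ => ?_
  rw [← permanent_transpose (M.submatrix _ _), ← permanent_permute_rows Fin.revPerm]
  congr 2
  ext a b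
  simp [Fin.rev_succ]

theorem Matrix.permanent_submatrix_eq_of_range_eq {m n : Type*} [Fintype m] [DecidableEq m]
    (M : Matrix m n R) {g₁ g₂ : m → n} (h₁ : Function.Injective g₁)
    (h₂ : Function.Injective g₂) (h : Set.range g₁ = Set.range g₂) :
    (M.submatrix id g₁).permanent = (M.submatrix id g₂).permanent := by
  let σ := (Equiv.ofInjective g₁ h₁).trans ((Equiv.setCongr h).trans (Equiv.ofInjective g₂ h₂).symm)
  have hσ : g₂ ∘ σ = g₁ := funext fun k => Equiv.apply_ofInjective_symm h₂ _
  rw [← hσ, ← permanent_permute_rows σ (M.submatrix id g₂)]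
  rfl

end Permanent

section ColumnMinor

variable {R : Type*} [CommSemiring R] {m n : ℕ}

theorem range_eq_of_injective_of_card_eq {α : Type*} {g : Fin m → α}
    (hg : Function.Injective g) {C : Finset α} (hC : C.card = m) (hgC : ∀ q, g q ∈ C) :
    Set.range g = C := by
  have himage : univ.image g = C := eq_of_subset_of_card_le (image_subset_iff.2 fun q _ => hgC q)
    (by rw [card_image_of_injective _ hg, card_univ, Fintype.card_fin, hC])
  rw [← himage, coe_image, coe_univ, Set.image_univ]

noncomputable def permMinor (A : Matrix (Fin m) (Fin n) R) (K : Finset (Fin n)) : R :=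
  if h : Kᶜ.card = m then (A.submatrix id (Kᶜ.orderEmbOfFin h)).permanent else 0

theorem permMinor_eq (A : Matrix (Fin m) (Fin n) R) {K : Finset (Fin n)} (hK : Kᶜ.card = m)
    {g : Fin m → Fin n} (hg : Function.Injective g) (hgK : ∀ q, g q ∉ K) :
    permMinor A K = (A.submatrix id g).permanent := by
  rw [permMinor, dif_pos hK]
  refine A.permanent_submatrix_eq_of_range_eq (Kᶜ.orderEmbOfFin hK).injective hg ?_
  rw [range_orderEmbOfFin, range_eq_of_injective_of_card_eq hg hK fun q => mem_compl.2 (hgK q)]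

theorem exists_permanent_ne_zero_of_permMinor_ne_zero {A : Matrix (Fin m) (Fin n) R}
    {K : Finset (Fin n)} (h : permMinor A K ≠ 0) :
    ∃ g : Fin m → Fin n, Function.Injective g ∧ (∀ q, g q ∉ K) ∧
      (A.submatrix id g).permanent ≠ 0 := by
  by_cases hK : Kᶜ.card = m
  · refine ⟨Kᶜ.orderEmbOfFin hK, (Kᶜ.orderEmbOfFin hK).injective,
      fun q => mem_compl.1 (orderEmbOfFin_mem _ _ q), ?_⟩
    rwa [permMinor, dif_pos hK] at h
  · exact absurd (dif_neg hK) h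

noncomputable def cofactorVec (A : Matrix (Fin m) (Fin n) R) (J : Finset (Fin n)) :
    Fin n → R :=
  fun j => if j ∈ J then 0 else permMinor A (insert j J)

theorem cofactorVec_erase_apply (A : Matrix (Fin m) (Fin n) R) {I : Finset (Fin n)}
    {c c' : Fin n} (hc : c ∈ I) (hc' : c' ∈ I) :
    cofactorVec A (I.erase c) c' = if c' = c then permMinor A I else 0 := by
  by_cases h : c' = c
  · subst h
    rw [if_pos rfl, cofactorVec, if_neg (notMem_erase c' I), insert_erase hc]
  · rw [if_neg h, cofactorVec, if_pos (mem_erase.2 ⟨h, hc'⟩)]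

theorem permMinor_snoc (A : Matrix (Fin m) (Fin n) R) (x : Fin n → R) {J : Finset (Fin n)}
    (hJ : Jᶜ.card = m + 1) :
    permMinor (of (Fin.snoc (fun i => A i) x)) J = cofactorVec A J ⬝ᵥ x := by
  rw [permMinor, dif_pos hJ, permanent_succ_row_last]
  set g := Jᶜ.orderEmbOfFin hJ
  have hgJ : ∀ q, g q ∉ J := fun q => mem_compl.1 (orderEmbOfFin_mem _ _ q)
  have hminor : ∀ q, (A.submatrix id (g ∘ q.succAbove)).permanent =
      permMinor A (insert (g q) J) := by
    intro q
    refine (permMinor_eq A ?_ (g.injective.comp Fin.succAbove_right_injective) fun c => ?_).symm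
    · rw [card_compl, card_insert_of_notMem (hgJ q), Fintype.card_fin]
      rw [card_compl, Fintype.card_fin] at hJ
      omega
    · simp only [Function.comp_apply, mem_insert, g.injective.eq_iff, not_or]
      exact ⟨Fin.succAbove_ne q c, hgJ _⟩
  have hrow : ∀ q : Fin (m + 1), ((of (Fin.snoc (fun i => A i) x)).submatrix id g).submatrix
      Fin.castSucc q.succAbove = A.submatrix id (g ∘ q.succAbove) := fun q => by ext; simp
  simp only [hrow, hminor, submatrix_apply, id, of_apply, Fin.snoc_last]
  calc ∑ q, x (g q) * permMinor A (insert (g q) J)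
      = ∑ j ∈ Jᶜ, x j * permMinor A (insert j J) := by
        rw [← map_orderEmbOfFin_univ Jᶜ hJ, sum_map]; rfl
    _ = ∑ j ∈ Jᶜ, cofactorVec A J j * x j :=
        sum_congr rfl fun j hj => by simp [cofactorVec, mem_compl.1 hj, mul_comm]
    _ = cofactorVec A J ⬝ᵥ x :=
        sum_subset (subset_univ _) fun j _ hj => by simp [cofactorVec, by simpa using hj]

end ColumnMinor

theorem AddChar.map_sum_eq_prod {A M ι : Type*} [AddCommMonoid A] [CommMonoid M]
    (ψ : AddChar A M) (s : Finset ι) (f : ι → A) : ψ (∑ i ∈ s, f i) = ∏ i ∈ s, ψ (f i) := by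
  induction s using Finset.cons_induction with
  | empty => simp
  | cons a s ha ih => rw [sum_cons, prod_cons, map_add_eq_mul, ih]

section Fourier

variable {N : ℕ} [NeZero N]

noncomputable def charSum (μ : ZMod N → ℝ) (c : ZMod N) : ℂ :=
  ∑ z, (μ z : ℂ) * ZMod.stdAddChar (c * z)

theorem charSum_zero {μ : ZMod N → ℝ} (hμ1 : ∑ z, μ z = 1) : charSum μ 0 = 1 := by
  simp [charSum, ← Complex.ofReal_sum, hμ1]

theorem norm_charSum_le_one {μ : ZMod N → ℝ} (hμ0 : ∀ z, 0 ≤ μ z) (hμ1 : ∑ z, μ z = 1)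
    (c : ZMod N) : ‖charSum μ c‖ ≤ 1 :=
  (norm_sum_le _ _).trans (by simp [AddChar.norm_apply, abs_of_nonneg (hμ0 _), hμ1])

theorem sum_stdAddChar_dotProduct {s : ℕ} (y : Fin s → ZMod N) :
    ∑ a : Fin s → ZMod N, ZMod.stdAddChar (a ⬝ᵥ y) = if y = 0 then (N : ℂ) ^ s else 0 := by
  simp_rw [dotProduct, AddChar.map_sum_eq_prod]
  rw [← Fintype.prod_sum (fun j c => ZMod.stdAddChar (c * y j))]
  simp_rw [AddChar.sum_mulShift _ (ZMod.isPrimitive_stdAddChar N), ZMod.card]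
  split_ifs with hy
  · simp [hy]
  · obtain ⟨j, hj⟩ := Function.ne_iff.1 hy
    exact prod_eq_zero (mem_univ j) (by simp [show y j ≠ 0 from hj])

theorem sum_prod_mul_stdAddChar_dotProduct {n : ℕ} (μ : ZMod N → ℝ) (v : Fin n → ZMod N) :
    ∑ x : Fin n → ZMod N, ((∏ i, μ (x i) : ℝ) : ℂ) * ZMod.stdAddChar (v ⬝ᵥ x) =
      ∏ i, charSum μ (v i) := by
  simp_rw [charSum, Fintype.prod_sum, dotProduct, AddChar.map_sum_eq_prod, Complex.ofReal_prod,
    ← prod_mul_distrib]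

theorem natCast_pow_mul_sum_filter_mulVec_eq_zero {s n : ℕ} (μ : ZMod N → ℝ)
    (U : Matrix (Fin s) (Fin n) (ZMod N)) :
    (N : ℂ) ^ s * ((∑ x with U *ᵥ x = 0, ∏ i, μ (x i) : ℝ) : ℂ) =
      ∑ a, ∏ i, charSum μ ((a ᵥ* U) i) := by
  calc (N : ℂ) ^ s * ((∑ x with U *ᵥ x = 0, ∏ i, μ (x i) : ℝ) : ℂ)
      = ∑ x, ((∏ i, μ (x i) : ℝ) : ℂ) * ∑ a, ZMod.stdAddChar (a ⬝ᵥ (U *ᵥ x)) := by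
        rw [sum_filter, Complex.ofReal_sum, mul_sum]
        refine sum_congr rfl fun x _ => ?_
        rw [sum_stdAddChar_dotProduct]
        split_ifs <;> simp [mul_comm]
    _ = ∑ a, ∑ x, ((∏ i, μ (x i) : ℝ) : ℂ) * ZMod.stdAddChar ((a ᵥ* U) ⬝ᵥ x) := by
        simp_rw [mul_sum, dotProduct_mulVec]
        exact sum_comm
    _ = ∑ a, ∏ i, charSum μ ((a ᵥ* U) i) :=
        sum_congr rfl fun a _ => sum_prod_mul_stdAddChar_dotProduct μ _

variable {μ : ZMod N → ℝ} {ρ : ℝ}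

theorem norm_prod_charSum_le {n r : ℕ} (hμ0 : ∀ z, 0 ≤ μ z) (hμ1 : ∑ z, μ z = 1)
    (hρ0 : 0 ≤ ρ) (hρ1 : ρ ≤ 1) (hρ : ∀ c ≠ 0, ‖charSum μ c‖ ≤ ρ) {v : Fin n → ZMod N}
    (hv : r ≤ #{i | v i ≠ 0}) : ‖∏ i, charSum μ (v i)‖ ≤ ρ ^ r := by
  set T : Finset (Fin n) := {i | v i ≠ 0}
  rw [norm_prod, ← prod_compl_mul_prod T]
  calc (∏ i ∈ Tᶜ, ‖charSum μ (v i)‖) * ∏ i ∈ T, ‖charSum μ (v i)‖ ≤ 1 * ∏ _i ∈ T, ρ :=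
        mul_le_mul (prod_le_one (fun _ _ => norm_nonneg _) fun _ _ => norm_charSum_le_one hμ0 hμ1 _)
          (prod_le_prod (fun _ _ => norm_nonneg _) fun i hi => hρ _ (mem_filter.1 hi).2)
          (prod_nonneg fun _ _ => norm_nonneg _) zero_le_one
    _ ≤ ρ ^ r := by
        rw [one_mul, prod_const]
        exact pow_le_pow_of_le_one hρ0 hρ1 hv

theorem sum_filter_mulVec_eq_zero_le {s n r : ℕ} (hμ0 : ∀ z, 0 ≤ μ z) (hμ1 : ∑ z, μ z = 1)
    (hρ0 : 0 ≤ ρ) (hρ1 : ρ ≤ 1) (hρ : ∀ c ≠ 0, ‖charSum μ c‖ ≤ ρ)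
    (U : Matrix (Fin s) (Fin n) (ZMod N)) (hU : ∀ a ≠ 0, r ≤ #{q | (a ᵥ* U) q ≠ 0}) :
    ∑ x with U *ᵥ x = 0, ∏ i, μ (x i) ≤ (N : ℝ)⁻¹ ^ s + ρ ^ r := by
  set P := ∑ x with U *ᵥ x = 0, ∏ i, μ (x i)
  have hP : 0 ≤ P := sum_nonneg fun x _ => prod_nonneg fun i _ => hμ0 _
  have hnorm : (N : ℝ) ^ s * P ≤ 1 + ((N : ℝ) ^ s - 1) * ρ ^ r := by
    have h := congrArg norm (natCast_pow_mul_sum_filter_mulVec_eq_zero μ U)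
    rw [norm_mul, norm_pow, Complex.norm_natCast, Complex.norm_real, Real.norm_of_nonneg hP] at h
    rw [h, ← add_sum_erase _ _ (mem_univ 0)]
    refine (norm_add_le _ _).trans (add_le_add (by simp [charSum_zero hμ1]) ?_)
    calc ‖∑ a ∈ univ.erase 0, ∏ i, charSum μ ((a ᵥ* U) i)‖
        ≤ ∑ _a ∈ univ.erase (0 : Fin s → ZMod N), ρ ^ r := (norm_sum_le _ _).trans <|
          sum_le_sum fun a ha => norm_prod_charSum_le hμ0 hμ1 hρ0 hρ1 hρ (hU a (ne_of_mem_erase ha))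
      _ = ((N : ℝ) ^ s - 1) * ρ ^ r := by
          rw [sum_const, card_erase_of_mem (mem_univ _), card_univ, Fintype.card_fun, ZMod.card,
            Fintype.card_fin, nsmul_eq_mul, Nat.cast_sub (Nat.one_le_pow _ _ (NeZero.pos N))]
          push_cast
          ring
  have hNs : (0 : ℝ) < (N : ℝ) ^ s := pow_pos (Nat.cast_pos.2 (NeZero.pos N)) s
  refine le_of_mul_le_mul_left (hnorm.trans ?_) hNs
  rw [mul_add, inv_pow, mul_inv_cancel₀ hNs.ne']
  nlinarith [pow_nonneg hρ0 r]

end Fourier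

theorem norm_charSum_lt_one {p : ℕ} [Fact p.Prime] {μ : ZMod p → ℝ} (hμ0 : ∀ z, 0 ≤ μ z)
    (hμ1 : ∑ z, μ z = 1) (hμsupp : ∃ a b, a ≠ b ∧ μ a ≠ 0 ∧ μ b ≠ 0) {c : ZMod p} (hc : c ≠ 0) :
    ‖charSum μ c‖ < 1 := by
  obtain ⟨a, b, hab, ha, hb⟩ := hμsupp
  simp_rw [charSum, ← Complex.real_smul]
  refine norm_sum_lt_of_strictConvexSpace (fun z _ => hμ0 z) hμ1 (mem_univ a) (mem_univ b) ?_ ha hb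
    fun z _ => (AddChar.norm_apply _ _).le
  exact fun h => hab (mul_left_cancel₀ hc (ZMod.injective_stdAddChar h))

theorem exists_norm_charSum_le_of_lt_one {p : ℕ} [Fact p.Prime] {μ : ZMod p → ℝ}
    (hμ0 : ∀ z, 0 ≤ μ z) (hμ1 : ∑ z, μ z = 1) (hμsupp : ∃ a b, a ≠ b ∧ μ a ≠ 0 ∧ μ b ≠ 0) :
    ∃ ρ, 0 ≤ ρ ∧ ρ < 1 ∧ ∀ c ≠ 0, ‖charSum μ c‖ ≤ ρ := by
  obtain ⟨c₀, hc₀, hmax⟩ := (univ.erase (0 : ZMod p)).exists_max_image (‖charSum μ ·‖)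
    ⟨1, mem_erase.2 ⟨one_ne_zero, mem_univ _⟩⟩
  exact ⟨_, norm_nonneg _, norm_charSum_lt_one hμ0 hμ1 hμsupp (ne_of_mem_erase hc₀),
    fun c hc => hmax c (mem_erase.2 ⟨hc, mem_univ c⟩)⟩

theorem AddMonoidHom.card_fiber_mul_card_eq {G M : Type*} [AddGroup G] [Fintype G] [AddMonoid M]
    [Fintype M] [DecidableEq M] (f : G →+ M) (hf : Function.Surjective f) (y : M) :
    #{g | f g = y} * Fintype.card M = Fintype.card G := by
  calc #{g | f g = y} * Fintype.card M = ∑ y' : M, #{g | f g = y'} := by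
        rw [sum_congr rfl fun y' _ => AddMonoidHom.card_fiber_eq_of_mem_range f (hf y') (hf y),
          sum_const, card_univ, smul_eq_mul, mul_comm]
    _ = Fintype.card G := (card_eq_sum_card_fiberwise fun _ _ => mem_univ _).symm

theorem exists_le_card_filter_of_mul_card_le_sum {ι α : Type*} [Fintype ι] [Fintype α]
    [Nonempty α] (P : ι → α → Prop) [∀ i a, Decidable (P i a)] {r : ℕ}
    (h : r * Fintype.card α ≤ ∑ i, #{a | P i a}) : ∃ a, r ≤ #{i | P i a} := by
  have hswap : ∑ a, #{i | P i a} = ∑ i, #{a | P i a} := by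
    simp only [card_filter]
    exact sum_comm
  obtain ⟨a, -, ha⟩ := exists_le_of_sum_le (f := fun _ => r) (g := fun a => #{i | P i a})
    univ_nonempty (by rwa [sum_const, card_univ, smul_eq_mul, mul_comm, hswap])
  exact ⟨a, ha⟩

theorem le_card_support_vecMul {F ι κ : Type*} [Semiring F] [DecidableEq F] [Fintype κ] {s : ℕ}
    (U : Matrix (Fin s) κ F) (e : ι → Fin s → κ) (T : Finset ι)
    (hT : ∀ i ∈ T, U.submatrix id (e i) = 1) (he : ∀ i ∈ T, ∀ i' ∈ T, ∀ t, e i t = e i' t → i = i')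
    {a : Fin s → F} (ha : a ≠ 0) : #T ≤ #{q | (a ᵥ* U) q ≠ 0} := by
  obtain ⟨t, ht⟩ := Function.ne_iff.1 ha
  have hval : ∀ i ∈ T, (a ᵥ* U) (e i t) = a t := fun i hi => by
    conv_rhs => rw [← vecMul_one a, ← hT i hi]
    rfl
  calc #T = #(T.image (e · t)) := (card_image_of_injOn fun i hi i' hi' => he i hi i' hi' t).symm
    _ ≤ #{q | (a ᵥ* U) q ≠ 0} := card_le_card fun q hq => by
        obtain ⟨i, hi, rfl⟩ := mem_image.1 hq
        simpa [hval i hi] using ht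

theorem exists_matrix_mulVec_eq_zero_and_le_card_support {F ι κ : Type*} [Field F] [Fintype F]
    [DecidableEq F] [Fintype ι] [Fintype κ] [DecidableEq κ] {s r : ℕ}
    (hι : r * Fintype.card F ^ (s * s) ≤ Fintype.card ι) (I : ι → Finset κ)
    (hcard : ∀ i, (I i).card = s) (hdisj : ∀ i j, i ≠ j → Disjoint (I i) (I j))
    (f : ι → κ → κ → F) (d : ι → F) (hd : ∀ i, d i ≠ 0)
    (hf : ∀ i, ∀ c ∈ I i, ∀ c' ∈ I i, f i c c' = if c' = c then d i else 0) :
    ∃ U : Matrix (Fin s) κ F,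
      (∀ x, (∀ i, ∀ c ∈ I i, f i c ⬝ᵥ x = 0) → U *ᵥ x = 0) ∧
      ∀ a ≠ 0, r ≤ #{q | (a ᵥ* U) q ≠ 0} := by
  let e : ι → Fin s → κ := fun i t =>
    (Fintype.equivFinOfCardEq ((Fintype.card_coe _).trans (hcard i))).symm t
  have he_mem : ∀ i t, e i t ∈ I i := fun i t => Subtype.prop _
  have he_inj : ∀ i, Function.Injective (e i) :=
    fun i => Subtype.val_injective.comp (Equiv.injective _)
  let G : Matrix (ι × Fin s) κ F := of fun it => f it.1 (e it.1 it.2)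
  let φ : ι → Matrix (Fin s) (ι × Fin s) F →+ Matrix (Fin s) (Fin s) F := fun i =>
    AddMonoidHom.mk' (fun Λ => (Λ * G).submatrix id (e i)) fun Λ Λ' => by rw [Matrix.add_mul]; rfl
  have hφ : ∀ i, Function.Surjective (φ i) := by
    intro i w
    refine ⟨of fun j it => if it.1 = i then (d i)⁻¹ * w j it.2 else 0, ?_⟩
    ext j t
    have hfe : ∀ t', f i (e i t') (e i t) = if t = t' then d i else 0 := fun t' => by
      simp only [hf i _ (he_mem i t') _ (he_mem i t), (he_inj i).eq_iff]
    simp [φ, G, Matrix.mul_apply, Fintype.sum_prod_type, hfe]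
    rw [mul_right_comm, inv_mul_cancel₀ (hd i), one_mul]
  -- the surjective additive map `φ i` takes the value `1` on a `|F|^{-s²}` fraction of all `Λ`;
  -- averaging over `Λ` gives one with `φ i Λ = 1` for at least `r` blocks `i`
  have hcount : ∀ i, #{Λ | φ i Λ = 1} * Fintype.card F ^ (s * s) =
      Fintype.card (Matrix (Fin s) (ι × Fin s) F) := by
    intro i
    have hM : Fintype.card (Matrix (Fin s) (Fin s) F) = Fintype.card F ^ (s * s) := by
      rw [pow_mul]
      exact (Fintype.card_fun ..).trans (by rw [Fintype.card_fun, Fintype.card_fin])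
    rw [← (φ i).card_fiber_mul_card_eq (hφ i) 1, hM]
  obtain ⟨Λ, hΛ⟩ := exists_le_card_filter_of_mul_card_le_sum (fun i Λ => φ i Λ = 1) <| by
    refine Nat.le_of_mul_le_mul_right (c := Fintype.card F ^ (s * s)) ?_
      (pow_pos Fintype.card_pos (s * s))
    calc _ = r * Fintype.card F ^ (s * s) * Fintype.card (Matrix (Fin s) (ι × Fin s) F) :=
          mul_right_comm ..
      _ ≤ Fintype.card ι * Fintype.card (Matrix (Fin s) (ι × Fin s) F) :=
          Nat.mul_le_mul_right _ hι
      _ = (∑ i, #{Λ | φ i Λ = 1}) * Fintype.card F ^ (s * s) := by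
          rw [sum_mul, sum_congr rfl fun i _ => hcount i, sum_const, card_univ, smul_eq_mul]
  refine ⟨Λ * G, fun x hx => ?_, fun a ha => hΛ.trans ?_⟩
  · have hG : G *ᵥ x = 0 := funext fun it => hx it.1 _ (he_mem _ _)
    rw [← mulVec_mulVec, hG, mulVec_zero]
  · refine le_card_support_vecMul _ e _ (fun i hi => (mem_filter.1 hi).2) ?_ ha
    intro i _ i' _ t h
    by_contra hne
    exact disjoint_left.1 (hdisj i i' hne) (he_mem i t) (h ▸ he_mem i' t)

theorem choose_mul_sum_filter_le_card_le {Ω ι : Type*} [Fintype Ω] [Fintype ι] [DecidableEq ι]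
    (W : Ω → ℝ) (hW : ∀ x, 0 ≤ W x) (bad : Ω → Finset ι) {k : ℕ} {β : ℝ}
    (hβ : ∀ S : Finset ι, #S = k → ∑ x with S ⊆ bad x, W x ≤ β) (m : ℕ) :
    (m.choose k : ℝ) * ∑ x with m ≤ #(bad x), W x ≤ (Fintype.card ι).choose k * β := by
  calc (m.choose k : ℝ) * ∑ x with m ≤ #(bad x), W x
      ≤ ∑ x, ((#(bad x)).choose k : ℝ) * W x := by
        rw [mul_sum, sum_filter]
        refine sum_le_sum fun x _ => ?_
        split_ifs with h
        · exact mul_le_mul_of_nonneg_right (by exact_mod_cast Nat.choose_le_choose k h) (hW x)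
        · exact mul_nonneg (Nat.cast_nonneg _) (hW x)
    _ = ∑ x, ∑ _S ∈ (bad x).powersetCard k, W x := by
        simp_rw [sum_const, card_powersetCard, nsmul_eq_mul]
    _ = ∑ S ∈ univ.powersetCard k, ∑ x with S ⊆ bad x, W x :=
        sum_comm' fun x S => by
          simp only [mem_powersetCard, mem_filter, mem_univ, subset_univ]
          tauto
    _ ≤ ∑ _S ∈ univ.powersetCard k, β := sum_le_sum fun S hS => hβ S (mem_powersetCard.1 hS).2
    _ = (Fintype.card ι).choose k * β := by
        rw [sum_const, card_powersetCard, card_univ, nsmul_eq_mul]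

theorem choose_add_le_mul_pow (k M e : ℕ) :
    ((k + M + e).choose k : ℝ) ≤ (k + M).choose k * (1 + k / (M + 1 : ℝ)) ^ e := by
  induction e with
  | zero => simp
  | succ e ih =>
    have h := Nat.choose_mul_succ_eq (k + M + e) k
    rw [show k + M + e + 1 - k = M + e + 1 by omega] at h
    have hstep : ((k + M + (e + 1)).choose k : ℝ) =
        (k + M + e).choose k * (1 + k / (M + e + 1 : ℝ)) := by
      have h' := congrArg (Nat.cast (R := ℝ)) h
      push_cast at h'
      rw [← add_assoc]
      field_simp
      linarith
    rw [hstep, pow_succ, ← mul_assoc]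
    refine mul_le_mul ih ?_ (by positivity) (by positivity)
    gcongr
    simp

theorem exists_choose_add_mul_le_choose_mul (k e : ℕ) {β γ : ℝ} (hβ : 0 < β) (hβγ : β < γ) :
    ∃ m, k ≤ m ∧ ((m + e).choose k : ℝ) * β ≤ m.choose k * γ := by
  have hlim : Tendsto (fun M : ℕ => (1 + k * (1 / (M + 1 : ℝ))) ^ e) atTop (𝓝 1) := by
    simpa using ((tendsto_one_div_add_atTop_nhds_zero_nat.const_mul (k : ℝ)).const_add 1).pow e
  obtain ⟨M, hM⟩ := (hlim.eventually (gt_mem_nhds ((one_lt_div hβ).2 hβγ))).exists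
  refine ⟨k + M, le_add_right le_rfl, ?_⟩
  calc ((k + M + e).choose k : ℝ) * β ≤ (k + M).choose k * (1 + k / (M + 1 : ℝ)) ^ e * β :=
        mul_le_mul_of_nonneg_right (choose_add_le_mul_pow k M e) hβ.le
    _ ≤ (k + M).choose k * (γ / β) * β := by
        rw [mul_one_div] at hM
        gcongr
    _ = (k + M).choose k * γ := by field_simp

section OneStepGrowth

variable {p : ℕ} [Fact p.Prime] {μ : ZMod p → ℝ} {ρ : ℝ}

theorem sum_filter_forall_dotProduct_eq_zero_le (hμ0 : ∀ z, 0 ≤ μ z) (hμ1 : ∑ z, μ z = 1)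
    (hρ0 : 0 ≤ ρ) (hρ1 : ρ ≤ 1) (hρ : ∀ c ≠ 0, ‖charSum μ c‖ ≤ ρ) {ι : Type*} [Fintype ι]
    [DecidableEq ι] {n s r : ℕ} (hι : r * p ^ (s * s) ≤ Fintype.card ι) (I : ι → Finset (Fin n))
    (hcard : ∀ i, (I i).card = s) (hdisj : ∀ i j, i ≠ j → Disjoint (I i) (I j))
    (f : ι → Fin n → Fin n → ZMod p) (d : ι → ZMod p) (hd : ∀ i, d i ≠ 0)
    (hf : ∀ i, ∀ c ∈ I i, ∀ c' ∈ I i, f i c c' = if c' = c then d i else 0) :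
    ∑ x with ∀ i, ∀ c ∈ I i, f i c ⬝ᵥ x = 0, ∏ q, μ (x q) ≤ (p : ℝ)⁻¹ ^ s + ρ ^ r := by
  obtain ⟨U, hU0, hU⟩ := exists_matrix_mulVec_eq_zero_and_le_card_support
    (by rwa [ZMod.card]) I hcard hdisj f d hd hf
  refine (sum_le_sum_of_subset_of_nonneg (monotone_filter_right _ fun x _ hx => hU0 x hx)
    fun x _ _ => prod_nonneg fun q _ => hμ0 _).trans ?_
  exact sum_filter_mulVec_eq_zero_le hμ0 hμ1 hρ0 hρ1 hρ U hU

variable {n s L : ℕ}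

noncomputable def badIndices (B : Matrix (Fin (n - s)) (Fin n) (ZMod p))
    (I : Fin L → Finset (Fin n)) (x : Fin n → ZMod p) : Finset (Fin L) :=
  {i | ∀ c ∈ I i, cofactorVec B ((I i).erase c) ⬝ᵥ x = 0}

theorem sum_filter_subset_badIndices_le (hμ0 : ∀ z, 0 ≤ μ z) (hμ1 : ∑ z, μ z = 1)
    (hρ0 : 0 ≤ ρ) (hρ1 : ρ ≤ 1) (hρ : ∀ c ≠ 0, ‖charSum μ c‖ ≤ ρ) {r : ℕ}
    (B : Matrix (Fin (n - s)) (Fin n) (ZMod p)) (I : Fin L → Finset (Fin n))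
    (hIcard : ∀ i, (I i).card = s) (hIdisj : ∀ i j, i ≠ j → Disjoint (I i) (I j))
    (hB : ∀ i, permMinor B (I i) ≠ 0) (S : Finset (Fin L)) (hS : r * p ^ (s * s) ≤ #S) :
    ∑ x with S ⊆ badIndices B I x, ∏ q, μ (x q) ≤ (p : ℝ)⁻¹ ^ s + ρ ^ r := by
  have h := sum_filter_forall_dotProduct_eq_zero_le hμ0 hμ1 hρ0 hρ1 hρ (ι := S)
    (by rwa [Fintype.card_coe]) (fun i => I i) (fun i => hIcard i)
    (fun i j hij => hIdisj i j (Subtype.coe_injective.ne hij))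
    (fun i c => cofactorVec B ((I i).erase c)) (fun i => permMinor B (I i)) (fun i => hB i)
    fun i c hc c' hc' => cofactorVec_erase_apply B hc hc'
  refine le_trans (le_of_eq (sum_congr (filter_congr fun x _ => ?_) fun _ _ => rfl)) h
  simp [badIndices, subset_iff]

theorem exists_disjoint_permanent_ne_zero_of_card_badIndices {ℓ : ℕ} (hs : 1 ≤ s)
    (hsn : s ≤ n) (B : Matrix (Fin (n - s)) (Fin n) (ZMod p)) (I : Fin L → Finset (Fin n))
    (hIcard : ∀ i, (I i).card = s) (hIdisj : ∀ i j, i ≠ j → Disjoint (I i) (I j))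
    (x : Fin n → ZMod p) (hx : #(badIndices B I x) + ℓ ≤ L) :
    ∃ J : Fin ℓ → Finset (Fin n),
      (∀ j, (J j).card = s - 1) ∧ (∀ i j, i ≠ j → Disjoint (J i) (J j)) ∧
      ∀ j, ∃ g : Fin (n - s + 1) → Fin n, Function.Injective g ∧ (∀ k, g k ∉ J j) ∧
        ((Matrix.of (Fin.snoc (fun i => B i) x)).submatrix id g).permanent ≠ 0 := by
  obtain ⟨G, hGgood, hGcard⟩ := exists_subset_card_eq (s := (badIndices B I x)ᶜ) (n := ℓ)
    (by rw [card_compl, Fintype.card_fin]; omega)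
  obtain ⟨σ, hσgood⟩ : ∃ σ : Fin ℓ ↪o Fin L, ∀ j, σ j ∉ badIndices B I x :=
    ⟨G.orderEmbOfFin hGcard, fun j => mem_compl.1 (hGgood (orderEmbOfFin_mem G hGcard j))⟩
  have hσ : ∀ j, ∃ c ∈ I (σ j), cofactorVec B ((I (σ j)).erase c) ⬝ᵥ x ≠ 0 := fun j => by
    simpa [badIndices] using hσgood j
  choose c hcI hc using hσ
  refine ⟨fun j => (I (σ j)).erase (c j), fun j => by rw [card_erase_of_mem (hcI j), hIcard],
    fun j j' hjj' => (hIdisj _ _ (σ.injective.ne hjj')).mono (erase_subset _ _) (erase_subset _ _),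
    fun j => exists_permanent_ne_zero_of_permMinor_ne_zero ?_⟩
  rw [permMinor_snoc]
  · exact hc j
  rw [card_compl, card_erase_of_mem (hcI j), hIcard, Fintype.card_fin]
  omega

end OneStepGrowth

theorem one_step_growth_general_general (p : ℕ) [Fact p.Prime]
    (μ : ZMod p → ℝ) (hμ0 : ∀ z, 0 ≤ μ z) (hμ1 : ∑ z, μ z = 1)
    (hμsupp : ∃ a b : ZMod p, a ≠ b ∧ μ a ≠ 0 ∧ μ b ≠ 0)
    (s ℓ : ℕ) (hs : 1 ≤ s) (ε : ℝ) (hε : 0 < ε) :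
    ∃ L N : ℕ, ∀ n : ℕ, N ≤ n →
      ∀ B : Matrix (Fin (n - s)) (Fin n) (ZMod p),
        (∃ I : Fin L → Finset (Fin n),
          (∀ i, (I i).card = s) ∧ (∀ i j, i ≠ j → Disjoint (I i) (I j)) ∧
          ∀ i, ∃ g : Fin (n - s) → Fin n, Function.Injective g ∧ (∀ k, g k ∉ I i) ∧
            (B.submatrix id g).permanent ≠ 0) →
        1 - ((p : ℝ))⁻¹ ^ s - ε ≤
          ∑ x ∈ Finset.univ.filter
              (fun x : Fin n → ZMod p =>
                ∃ J : Fin ℓ → Finset (Fin n),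
                  (∀ j, (J j).card = s - 1) ∧ (∀ i j, i ≠ j → Disjoint (J i) (J j)) ∧
                  ∀ j, ∃ g : Fin (n - s + 1) → Fin n, Function.Injective g ∧
                    (∀ k, g k ∉ J j) ∧
                    ((Matrix.of (Fin.snoc (fun i => B i) x)).submatrix id g).permanent ≠ 0),
            ∏ i, μ (x i) := by
  obtain ⟨ρ, hρ0, hρ1, hρ⟩ := exists_norm_charSum_le_of_lt_one hμ0 hμ1 hμsupp
  obtain ⟨r, hr⟩ := exists_pow_lt_of_lt_one (half_pos hε) hρ1
  obtain ⟨m, hkm, hm⟩ := exists_choose_add_mul_le_choose_mul (r * p ^ (s * s)) (ℓ - 1)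
    (by positivity : 0 < (p : ℝ)⁻¹ ^ s + ε / 2) (by linarith : _ < (p : ℝ)⁻¹ ^ s + ε)
  refine ⟨m + (ℓ - 1), s, fun n hsn B ⟨I, hIcard, hIdisj, hI⟩ => ?_⟩
  have hB : ∀ i, permMinor B (I i) ≠ 0 := fun i => by
    obtain ⟨g, hg, hgI, hper⟩ := hI i
    rwa [permMinor_eq B (by rw [card_compl, hIcard, Fintype.card_fin]) hg hgI]
  have hfail : ∑ x with m ≤ #(badIndices B I x), ∏ q, μ (x q) ≤ (p : ℝ)⁻¹ ^ s + ε := by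
    have hmoment := choose_mul_sum_filter_le_card_le (k := r * p ^ (s * s))
      (β := (p : ℝ)⁻¹ ^ s + ε / 2) (fun x => ∏ q, μ (x q))
      (fun x => prod_nonneg fun q _ => hμ0 _) (badIndices B I) (fun S hS =>
        (sum_filter_subset_badIndices_le hμ0 hμ1 hρ0 hρ1.le hρ B I hIcard hIdisj hB S hS.ge).trans
          (by linarith)) m
    rw [Fintype.card_fin] at hmoment
    exact le_of_mul_le_mul_left (hmoment.trans hm) (by exact_mod_cast Nat.choose_pos hkm)
  have htotal : ∑ x : Fin n → ZMod p, ∏ q, μ (x q) = 1 := by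
    rw [← Fintype.prod_sum (fun _ z => μ z)]
    simp [hμ1]
  calc 1 - (p : ℝ)⁻¹ ^ s - ε ≤ ∑ x with ¬ m ≤ #(badIndices B I x), ∏ q, μ (x q) := by
        rw [← htotal, ← sum_filter_add_sum_filter_not univ (fun x => m ≤ #(badIndices B I x))]
        linarith
    _ ≤ _ := sum_le_sum_of_subset_of_nonneg (monotone_filter_right _ fun x _ hx =>
        exists_disjoint_permanent_ne_zero_of_card_badIndices hs hsn B I hIcard hIdisj x
          (by omega)) fun x _ _ => prod_nonneg fun q _ => hμ0 _

/-- One-step growth lemma for general distributions: for a prime `p ≥ 3`, a distribution `μ` on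
`F_p` supported on more than one value, `s, ℓ ≥ 1` and `ε > 0`, there are `L, N ∈ ℕ` such that
for all `n ≥ N`: if a fixed `(n-s) × n` matrix `B` over `F_p` has `L` pairwise disjoint size-`s`
column sets whose deletion leaves a matrix with nonzero permanent, then appending a row `x` with
independent `μ`-distributed entries, with probability at least `1 - p^{-s} - ε` there are `ℓ`
pairwise disjoint size-`(s-1)` column sets whose deletion from the extended matrix leaves an
`(n-s+1) × (n-s+1)` matrix with nonzero permanent. -/
theorem one_step_growth_general (p : ℕ) [Fact p.Prime] (hp3 : 3 ≤ p)
    (μ : ZMod p → ℝ) (hμ0 : ∀ z, 0 ≤ μ z) (hμ1 : ∑ z, μ z = 1)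
    (hμsupp : ∃ a b : ZMod p, a ≠ b ∧ μ a ≠ 0 ∧ μ b ≠ 0)
    (s ℓ : ℕ) (hs : 1 ≤ s) (hℓ : 1 ≤ ℓ) (ε : ℝ) (hε : 0 < ε) :
    ∃ L N : ℕ, ∀ n : ℕ, N ≤ n →
      ∀ B : Matrix (Fin (n - s)) (Fin n) (ZMod p),
        (∃ I : Fin L → Finset (Fin n),
          (∀ i, (I i).card = s) ∧ (∀ i j, i ≠ j → Disjoint (I i) (I j)) ∧
          ∀ i, ∃ g : Fin (n - s) → Fin n, Function.Injective g ∧ (∀ k, g k ∉ I i) ∧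
            (B.submatrix id g).permanent ≠ 0) →
        1 - ((p : ℝ))⁻¹ ^ s - ε ≤
          ∑ x ∈ Finset.univ.filter
              (fun x : Fin n → ZMod p =>
                ∃ J : Fin ℓ → Finset (Fin n),
                  (∀ j, (J j).card = s - 1) ∧ (∀ i j, i ≠ j → Disjoint (J i) (J j)) ∧
                  ∀ j, ∃ g : Fin (n - s + 1) → Fin n, Function.Injective g ∧
                    (∀ k, g k ∉ J j) ∧
                    ((Matrix.of (Fin.snoc (fun i => B i) x)).submatrix id g).permanent ≠ 0),
            ∏ i, μ (x i) :=
  one_step_growth_general_general p μ hμ0 hμ1 hμsupp s ℓ hs ε hε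
end

section
/- Let p ≥ 3 be a prime and let μ be a probability distribution on F_p supported on more than one value. For any r ≥ 1, ℓ ≥ 1 and ε > 0, there exists D ∈ ℕ such that the following holds for all n ≥ 1. Let M ∈ F_p^{n×n} be a matrix and let I_1,…,I_D ⊆ {1,…,n} be pairwise disjoint sets of size r such that for each i = 1,…,D, the r×r submatrix M[I_i × I_i] (rows and columns both indexed by I_i) has rank r. Let x ∈ F_p^n be a random vector with independent μ-distributed entries. Then the probability that the vector Mx has at most ℓ nonzero entries is at most 2·p^{-r} + ε. -/
/-!
Let `φ(t) = ∑ z, μ z ψ(t z)`, with `ψ` the standard additive character of `𝔽_p`, be the Fourier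
transform of `μ`; since `μ` charges two points, `|φ t| ≤ θ < 1` for `t ≠ 0`. For a subspace
`W`, Fourier inversion gives `P[x ⊥ W] = |W|⁻¹ ∑_{w ∈ W} ∏_c φ(w_c)`. This is at most
`p^{-dim W} + θ^m` when every nonzero `w ∈ W` has `m` nonzero coordinates, and at most
`ρ^{dim W}` with `ρ = (1 + (p - 1) θ) / p` in general, by restricting to `dim W` coordinates
that determine `w ∈ W`.

`Mx` vanishes on block `I_i` exactly when `x` is orthogonal to the rows of `M` indexed by `I_i`,
and if `Mx` has at most `ℓ` nonzero entries, at most `ℓ` blocks fail this. If the rows of all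
blocks span a space of dimension at least `m = ℓ r + s`, a greedy choice gives `m` blocks whose
rows span dimension `m`; removing `ℓ` of them, including the failing ones, leaves dimension `s`,
and a union bound over the `ℓ`-subsets gives `C(m, ℓ) ρ^s ≤ ε`. Otherwise all block row spaces
lie in one space of bounded size, so by pigeonhole some `k > ℓ` blocks share one row space `W₀`
of dimension `r`. As `M[I_i × I_i]` is invertible, every nonzero `w ∈ W₀` is nonzero on each of
these disjoint blocks, and sparsity of `Mx` forces `x ⊥ W₀`, giving `p^{-r} + θ^k ≤ 2 p^{-r}`.
-/

open scoped Classical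

open Finset Function Module Submodule Matrix

namespace HammingAnticoncentration

section Weights

variable {K ι : Type*} [Fintype ι] {μ : K → ℝ}

def prodWeight (μ : K → ℝ) (s : Finset (ι → K)) : ℝ := ∑ x ∈ s, ∏ c, μ (x c)

lemma prodWeight_mono (hμ0 : ∀ z, 0 ≤ μ z) {s t : Finset (ι → K)} (hst : s ⊆ t) :
    prodWeight μ s ≤ prodWeight μ t :=
  sum_le_sum_of_subset_of_nonneg hst fun x _ _ => prod_nonneg fun c _ => hμ0 (x c)

lemma prodWeight_biUnion_le {β : Type*} [DecidableEq (ι → K)] (hμ0 : ∀ z, 0 ≤ μ z)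
    (𝔅 : Finset β) (t : β → Finset (ι → K)) :
    prodWeight μ (𝔅.biUnion t) ≤ ∑ B ∈ 𝔅, prodWeight μ (t B) := by
  induction 𝔅 using Finset.induction_on with
  | empty => simp [prodWeight]
  | insert B 𝔅 hB ih =>
    have hinter : 0 ≤ prodWeight μ (t B ∩ 𝔅.biUnion t) :=
      sum_nonneg fun x _ => prod_nonneg fun c _ => hμ0 (x c)
    have hunion := sum_union_inter (s₁ := t B) (s₂ := 𝔅.biUnion t) (f := fun x => ∏ c, μ (x c))
    rw [biUnion_insert, sum_insert hB]
    unfold prodWeight at *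
    linarith

end Weights

section Orthogonality

variable {K ι : Type*} [Field K] [Fintype ι]

noncomputable def orth [Fintype K] (W : Submodule K (ι → K)) : Finset (ι → K) :=
  {x | ∀ w ∈ W, w ⬝ᵥ x = 0}

lemma mem_orth_span_iff [Fintype K] {S : Set (ι → K)} {x : ι → K} :
    x ∈ orth (span K S) ↔ ∀ w ∈ S, w ⬝ᵥ x = 0 := by
  simp only [orth, mem_filter, mem_univ, true_and]
  refine ⟨fun h w hw => h w (subset_span hw), fun h w hw => ?_⟩
  induction hw using Submodule.span_induction with
  | mem w hw => exact h w hw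
  | zero => exact zero_dotProduct x
  | add u v _ _ hu hv => rw [add_dotProduct, hu, hv, add_zero]
  | smul c u _ hu => rw [smul_dotProduct, hu, smul_zero]

/-- The coordinate functionals span the dual of `W`, so `finrank K W` of them already
separate its points. -/
lemma exists_determining_finset_card_le_finrank (W : Submodule K (ι → K)) :
    ∃ s : Finset ι, #s ≤ finrank K W ∧ ∀ w ∈ W, (∀ c ∈ s, w c = 0) → w = 0 := by
  let e : ι → Module.Dual K W := fun c => (LinearMap.proj c).comp W.subtype
  obtain ⟨κ, a, ha, hspan, hli⟩ := exists_linearIndependent' K e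
  have : Fintype κ := Fintype.ofInjective a ha
  refine ⟨univ.image a, card_image_le.trans ?_, fun w hw hs => ?_⟩
  · rw [card_univ]
    exact hli.fintype_card_le_finrank.trans_eq Subspace.dual_finrank_eq
  · have hker : span K (Set.range e) ≤ LinearMap.ker (Module.Dual.eval K W ⟨w, hw⟩) := by
      rw [← hspan, span_le]
      rintro _ ⟨k, rfl⟩
      simpa [e] using hs (a k) (mem_image_of_mem a (mem_univ k))
    funext c
    simpa [e] using hker (subset_span ⟨c, rfl⟩)

end Orthogonality

section RowSpan

variable {K ι m : Type*} [Field K]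

def rowSpan (M : Matrix m ι K) (s : Finset m) : Submodule K (ι → K) := span K (M.row '' s)

lemma rowSpan_mono (M : Matrix m ι K) {s t : Finset m} (h : s ⊆ t) :
    rowSpan M s ≤ rowSpan M t :=
  span_mono (Set.image_mono (coe_subset.2 h))

lemma rowSpan_union [DecidableEq m] (M : Matrix m ι K) (s t : Finset m) :
    rowSpan M (s ∪ t) = rowSpan M s ⊔ rowSpan M t := by
  rw [rowSpan, coe_union, Set.image_union, span_union]
  rfl

lemma finrank_rowSpan_le_card [Fintype ι] [DecidableEq ι] (M : Matrix m ι K) (s : Finset m) :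
    finrank K (rowSpan M s) ≤ #s := by
  rw [rowSpan, ← coe_image]
  exact (finrank_span_finset_le_card _).trans card_image_le

lemma mem_orth_rowSpan_iff [Fintype ι] [Fintype K] {M : Matrix m ι K} {s : Finset m}
    {x : ι → K} : x ∈ orth (rowSpan M s) ↔ ∀ a ∈ s, (M *ᵥ x) a = 0 := by
  rw [rowSpan, mem_orth_span_iff, Set.forall_mem_image]
  rfl

lemma finrank_rowSpan_biUnion_le {β : Type*} [Fintype ι] [DecidableEq ι] [DecidableEq m]
    [DecidableEq β] {M : Matrix m ι K} {I : β → Finset m} {r : ℕ}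
    (hIcard : ∀ i, #(I i) ≤ r) (G B : Finset β) :
    finrank K (rowSpan M (G.biUnion I)) ≤ finrank K (rowSpan M ((G \ B).biUnion I)) + #B * r :=
  calc finrank K (rowSpan M (G.biUnion I))
      ≤ finrank K (rowSpan M ((G \ B).biUnion I ∪ B.biUnion I)) := by
        refine Submodule.finrank_mono (rowSpan_mono M ?_)
        rw [← union_biUnion]
        exact biUnion_subset_biUnion_of_subset_left I le_sdiff_sup
    _ ≤ finrank K (rowSpan M ((G \ B).biUnion I)) + finrank K (rowSpan M (B.biUnion I)) := by
        rw [rowSpan_union]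
        exact Submodule.finrank_add_le_finrank_add_finrank _ _
    _ ≤ _ := by
        gcongr
        exact (finrank_rowSpan_le_card M _).trans
          (card_biUnion_le_card_mul B I r fun i _ => hIcard i)

variable [Fintype ι] {M : Matrix ι ι K} {s : Finset ι}

lemma linearIndependent_restrict_row_of_rank
    (h : (M.submatrix ((↑) : s → ι) ((↑) : s → ι)).rank = #s) :
    LinearIndependent K (LinearMap.funLeft K K ((↑) : s → ι) ∘ fun a : s => M.row a) := by
  have hrow : (LinearMap.funLeft K K ((↑) : s → ι) ∘ fun a : s => M.row a) =
      (M.submatrix ((↑) : s → ι) ((↑) : s → ι)).row := by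
    ext
    rfl
  rw [hrow, linearIndependent_iff_card_eq_finrank_span, Set.finrank, ← rank_eq_finrank_span_row,
    h, Fintype.card_coe]

lemma finrank_rowSpan_of_rank (h : (M.submatrix ((↑) : s → ι) ((↑) : s → ι)).rank = #s) :
    finrank K (rowSpan M s) = #s := by
  rw [rowSpan, Set.image_eq_range]
  exact (finrank_span_eq_card (linearIndependent_restrict_row_of_rank h).of_comp).trans
    (Fintype.card_coe s)

lemma exists_ne_zero_of_mem_rowSpan (h : (M.submatrix ((↑) : s → ι) ((↑) : s → ι)).rank = #s)
    {w : ι → K} (hw : w ∈ rowSpan M s) (hw0 : w ≠ 0) : ∃ a ∈ s, w a ≠ 0 := by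
  by_contra! hzero
  rw [rowSpan, Set.image_eq_range] at hw
  exact hw0 (disjoint_def.1 (range_ker_disjoint (linearIndependent_restrict_row_of_rank h)) w hw
    (funext fun a => hzero a a.2))

end RowSpan

section Counting

variable {β ι : Type*}

lemma card_le_card_of_forall_exists_mem {I : β → Finset ι} (hI : Pairwise (Disjoint on I))
    {C : Finset β} {S : Finset ι} (h : ∀ i ∈ C, ∃ a ∈ I i, a ∈ S) : #C ≤ #S :=
  calc #C ≤ #(C.biUnion fun i => I i ∩ S) :=
        card_le_card_biUnion
          (fun i _ j _ hij => (hI hij).mono inter_subset_left inter_subset_left)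
          fun i hi => by obtain ⟨a, ha, haS⟩ := h i hi; exact ⟨a, mem_inter.2 ⟨ha, haS⟩⟩
    _ ≤ #S := card_le_card (biUnion_subset.2 fun _ _ => inter_subset_right)

lemma sum_prod_le_pow_card_of_injective {V K : Type*} [Fintype V] [Fintype K] {s : Finset ι}
    {π : V → ι → K} (hπ : Injective fun (v : V) (c : s) => π v c) {F : K → ℝ}
    (hF : ∀ t, 0 ≤ F t) : ∑ v, ∏ c ∈ s, F (π v c) ≤ (∑ t, F t) ^ #s :=
  calc ∑ v, ∏ c ∈ s, F (π v c)
      = ∑ η ∈ univ.image fun (v : V) (c : s) => π v c, ∏ c, F (η c) := by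
        rw [sum_image fun _ _ _ _ h => hπ h]
        exact sum_congr rfl fun v _ => (prod_coe_sort s fun c => F (π v c)).symm
    _ ≤ ∑ η : s → K, ∏ c, F (η c) :=
        sum_le_univ_sum_of_nonneg fun η => prod_nonneg fun c _ => hF (η c)
    _ = (∑ t, F t) ^ #s := by rw [← Fintype.prod_sum, prod_const, card_univ, Fintype.card_coe]

lemma exists_le_card_fiber_of_forall_le {K V : Type*} [Field K] [Fintype K] [AddCommGroup V]
    [Module K V] [Fintype V] [Fintype β] (W : β → Submodule K V) {U : Submodule K V}
    (hW : ∀ i, W i ≤ U) {d k : ℕ} (hU : finrank K U ≤ d)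
    (hk : 2 ^ Fintype.card K ^ d * k ≤ Fintype.card β) :
    ∃ W₀ : Submodule K V, k ≤ #{i | W i = W₀} := by
  let t : Finset (Submodule K V) :=
    (univ.filter (· ∈ U)).powerset.image fun S : Finset V => span K (S : Set V)
  have hmaps (i : β) : W i ∈ t := by
    refine mem_image.2 ⟨univ.filter (· ∈ W i), mem_powerset.2 fun v hv => ?_, ?_⟩
    · simp only [mem_filter, mem_univ, true_and] at hv ⊢
      exact hW i hv
    · simp
  have hcard : #t * k ≤ #(univ : Finset β) := by
    refine le_trans (Nat.mul_le_mul_right k (card_image_le.trans ?_)) (hk.trans_eq card_univ.symm)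
    rw [card_powerset, ← Fintype.card_subtype, Module.card_eq_pow_finrank (K := K)]
    exact Nat.pow_le_pow_right two_pos (Nat.pow_le_pow_right Fintype.card_pos hU)
  obtain ⟨W₀, -, hW₀⟩ := exists_le_card_fiber_of_mul_le_card_of_maps_to
    (fun i _ => hmaps i) ⟨_, mem_image_of_mem _ (empty_mem_powerset _)⟩ hcard
  exact ⟨W₀, hW₀⟩

lemma exists_card_eq_le_finrank_rowSpan_biUnion {K m : Type*} [Field K] [Fintype ι]
    [DecidableEq m] [Fintype β] (M : Matrix m ι K) (I : β → Finset m) {k : ℕ}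
    (hkβ : k ≤ Fintype.card β) (hk : k ≤ finrank K (rowSpan M (univ.biUnion I))) :
    ∃ G : Finset β, #G = k ∧ k ≤ finrank K (rowSpan M (G.biUnion I)) := by
  induction k with
  | zero => exact ⟨∅, rfl, Nat.zero_le _⟩
  | succ k ih =>
    obtain ⟨G, hG, hkG⟩ := ih (by omega) (by omega)
    have hmono (i : β) : rowSpan M (G.biUnion I) ≤ rowSpan M ((insert i G).biUnion I) :=
      rowSpan_mono M (biUnion_subset_biUnion_of_subset_left I (subset_insert i G))
    by_cases hall : rowSpan M (univ.biUnion I) ≤ rowSpan M (G.biUnion I)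
    · obtain ⟨i, hi⟩ : ∃ i, i ∉ G := by
        by_contra! h
        rw [eq_univ_of_forall h, card_univ] at hG
        omega
      refine ⟨insert i G, by rw [card_insert_of_notMem hi, hG], ?_⟩
      calc k + 1 ≤ finrank K (rowSpan M (univ.biUnion I)) := hk
        _ ≤ finrank K (rowSpan M (G.biUnion I)) := Submodule.finrank_mono hall
        _ ≤ _ := Submodule.finrank_mono (hmono i)
    · rw [rowSpan, span_le] at hall
      obtain ⟨_, ⟨a, ha, rfl⟩, haG⟩ := Set.not_subset.1 hall
      obtain ⟨i, -, hai⟩ := mem_biUnion.1 ha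
      have hrow : M.row a ∈ rowSpan M ((insert i G).biUnion I) :=
        subset_span ⟨a, mem_biUnion.2 ⟨i, mem_insert_self i G, hai⟩, rfl⟩
      have hi : i ∉ G := fun hi => haG (subset_span ⟨a, mem_biUnion.2 ⟨i, hi, hai⟩, rfl⟩)
      refine ⟨insert i G, by rw [card_insert_of_notMem hi, hG], ?_⟩
      have hlt := Submodule.finrank_lt_finrank_of_lt
        (lt_of_le_of_ne (hmono i) fun h => haG (h ▸ hrow))
      omega

end Counting

section Fourier

variable {ι : Type*} [Fintype ι] {p : ℕ} [Fact p.Prime]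

noncomputable def charFn (μ : ZMod p → ℝ) (t : ZMod p) : ℂ :=
  ∑ z, μ z • ZMod.stdAddChar (t * z)

variable {μ : ZMod p → ℝ}

lemma charFn_zero (hμ1 : ∑ z, μ z = 1) : charFn μ 0 = 1 := by
  simp [charFn, Complex.real_smul, ← Complex.ofReal_sum, hμ1]

lemma norm_charFn_le_one (hμ0 : ∀ z, 0 ≤ μ z) (hμ1 : ∑ z, μ z = 1) (t : ZMod p) :
    ‖charFn μ t‖ ≤ 1 :=
  calc ‖charFn μ t‖ ≤ ∑ z, ‖μ z • (ZMod.stdAddChar (t * z) : ℂ)‖ := norm_sum_le _ _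
    _ = 1 := by simp [Real.norm_of_nonneg (hμ0 _), hμ1]

lemma norm_charFn_lt_one (hμ0 : ∀ z, 0 ≤ μ z) (hμ1 : ∑ z, μ z = 1)
    (hμsupp : ∃ a b : ZMod p, a ≠ b ∧ μ a ≠ 0 ∧ μ b ≠ 0) {t : ZMod p} (ht : t ≠ 0) :
    ‖charFn μ t‖ < 1 := by
  obtain ⟨a, b, hab, ha, hb⟩ := hμsupp
  refine norm_sum_lt_of_strictConvexSpace (fun z _ => hμ0 z) hμ1 (mem_univ a) (mem_univ b)
    (fun h => hab ?_) ha hb fun z _ => by simp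
  exact mul_left_cancel₀ ht (ZMod.injective_stdAddChar h)

lemma exists_norm_charFn_le_lt_one (hμ0 : ∀ z, 0 ≤ μ z) (hμ1 : ∑ z, μ z = 1)
    (hμsupp : ∃ a b : ZMod p, a ≠ b ∧ μ a ≠ 0 ∧ μ b ≠ 0) :
    ∃ θ : ℝ, 0 ≤ θ ∧ θ < 1 ∧ ∀ t ≠ 0, ‖charFn μ t‖ ≤ θ := by
  obtain ⟨t₀, ht₀, hmax⟩ := (univ.erase (0 : ZMod p)).exists_max_image (‖charFn μ ·‖)
    ⟨1, by simp⟩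
  exact ⟨_, norm_nonneg _, norm_charFn_lt_one hμ0 hμ1 hμsupp (ne_of_mem_erase ht₀),
    fun t ht => hmax t (by simp [ht])⟩

lemma stdAddChar_dotProduct (w x : ι → ZMod p) :
    ZMod.stdAddChar (w ⬝ᵥ x) = ∏ c, ZMod.stdAddChar (w c * x c) := by
  simp only [dotProduct]
  induction (univ : Finset ι) using Finset.cons_induction with
  | empty => simp
  | cons c s hc ih => rw [sum_cons, prod_cons, AddChar.map_add_eq_mul, ih]

lemma sum_stdAddChar_dotProduct (W : Submodule (ZMod p) (ι → ZMod p)) (x : ι → ZMod p) :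
    ∑ w : W, ZMod.stdAddChar ((w : ι → ZMod p) ⬝ᵥ x) =
      if x ∈ orth W then (Fintype.card W : ℂ) else 0 := by
  let f : W →+ ZMod p :=
    ((dotProductBilin (ZMod p) (ZMod p)).flip x ∘ₗ W.subtype).toAddMonoidHom
  have := AddChar.sum_eq_ite (ZMod.stdAddChar.compAddMonoidHom f)
  simp only [AddChar.compAddMonoidHom_apply] at this
  convert this using 2
  · rfl
  · rw [AddChar.eq_zero_iff]
    simp only [orth, mem_filter, mem_univ, true_and, AddChar.compAddMonoidHom_apply,
      Subtype.forall]
    exact forall₂_congr fun w _ =>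
      (ZMod.injective_stdAddChar.eq_iff' (AddChar.map_zero_eq_one _)).symm

lemma prodWeight_orth_eq (W : Submodule (ZMod p) (ι → ZMod p)) :
    (prodWeight μ (orth W) : ℂ) =
      (Fintype.card W : ℂ)⁻¹ * ∑ w : W, ∏ c, charFn μ ((w : ι → ZMod p) c) := by
  have hind (x : ι → ZMod p) : (if x ∈ orth W then (1 : ℂ) else 0) =
      (Fintype.card W : ℂ)⁻¹ * ∑ w : W, ZMod.stdAddChar ((w : ι → ZMod p) ⬝ᵥ x) := by
    rw [sum_stdAddChar_dotProduct]
    split_ifs <;> simp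
  calc (prodWeight μ (orth W) : ℂ)
      = ∑ x, (∏ c, (μ (x c) : ℂ)) * if x ∈ orth W then 1 else 0 := by
        simp [prodWeight]
    _ = (Fintype.card W : ℂ)⁻¹ * ∑ w : W, ∑ x : ι → ZMod p,
          ∏ c, μ (x c) • ZMod.stdAddChar ((w : ι → ZMod p) c * x c) := by
        simp_rw [hind, mul_left_comm _ (Fintype.card W : ℂ)⁻¹, ← mul_sum, mul_sum]
        rw [sum_comm]
        simp_rw [stdAddChar_dotProduct, Complex.real_smul, prod_mul_distrib]
    _ = _ := by simp_rw [charFn, Fintype.prod_sum]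

lemma prodWeight_orth_le (hμ0 : ∀ z, 0 ≤ μ z) (W : Submodule (ZMod p) (ι → ZMod p)) :
    prodWeight μ (orth W) ≤
      (Fintype.card W : ℝ)⁻¹ * ∑ w : W, ∏ c, ‖charFn μ ((w : ι → ZMod p) c)‖ := by
  have h0 : 0 ≤ prodWeight μ (orth W) := sum_nonneg fun x _ => prod_nonneg fun c _ => hμ0 _
  calc prodWeight μ (orth W) = ‖(prodWeight μ (orth W) : ℂ)‖ := by
        rw [Complex.norm_real, Real.norm_of_nonneg h0]
    _ ≤ _ := by
        rw [prodWeight_orth_eq, norm_mul, norm_inv, Complex.norm_natCast]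
        gcongr
        exact (norm_sum_le _ _).trans_eq (by simp_rw [norm_prod])

lemma card_submodule_eq_pow_finrank {V : Type*} [AddCommGroup V] [Module (ZMod p) V]
    [Fintype V] (W : Submodule (ZMod p) V) : Fintype.card W = p ^ finrank (ZMod p) W := by
  rw [Module.card_eq_pow_finrank (K := ZMod p), ZMod.card]

lemma prod_norm_charFn_le_pow_card_support (hμ0 : ∀ z, 0 ≤ μ z) (hμ1 : ∑ z, μ z = 1) {θ : ℝ}
    (hθ : ∀ t ≠ 0, ‖charFn μ t‖ ≤ θ) (w : ι → ZMod p) :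
    ∏ c, ‖charFn μ (w c)‖ ≤ θ ^ #{c | w c ≠ 0} :=
  calc ∏ c, ‖charFn μ (w c)‖ ≤ ∏ c ∈ {c | w c ≠ 0}, ‖charFn μ (w c)‖ :=
        prod_le_prod_of_subset_of_le_one (subset_univ _) (fun _ _ => norm_nonneg _)
          fun _ _ _ => norm_charFn_le_one hμ0 hμ1 _
    _ ≤ θ ^ #{c | w c ≠ 0} :=
        (prod_le_prod (fun _ _ => norm_nonneg _) fun _ hc => hθ _ (mem_filter.1 hc).2).trans_eq
          (prod_const θ)

lemma sum_prod_norm_charFn_le_of_le_card_support (hμ0 : ∀ z, 0 ≤ μ z) (hμ1 : ∑ z, μ z = 1)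
    {θ : ℝ} (hθ0 : 0 ≤ θ) (hθ1 : θ ≤ 1) (hθ : ∀ t ≠ 0, ‖charFn μ t‖ ≤ θ)
    (W : Submodule (ZMod p) (ι → ZMod p)) {m : ℕ}
    (hW : ∀ w ∈ W, w ≠ 0 → m ≤ #{c | w c ≠ 0}) :
    ∑ w : W, ∏ c, ‖charFn μ ((w : ι → ZMod p) c)‖ ≤ 1 + Fintype.card W * θ ^ m := by
  have hterm (w : W) :
      ∏ c, ‖charFn μ ((w : ι → ZMod p) c)‖ ≤ (if w = 0 then 1 else 0) + θ ^ m := by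
    split_ifs with hw
    · simp [hw, charFn_zero hμ1, pow_nonneg hθ0]
    · rw [zero_add]
      exact (prod_norm_charFn_le_pow_card_support hμ0 hμ1 hθ _).trans
        (pow_le_pow_of_le_one hθ0 hθ1 (hW w w.2 (by simpa using hw)))
  refine (sum_le_sum fun w _ => hterm w).trans_eq ?_
  rw [sum_add_distrib, sum_ite_eq', if_pos (mem_univ _), sum_const, card_univ, nsmul_eq_mul]

lemma prodWeight_orth_le_of_le_card_support (hμ0 : ∀ z, 0 ≤ μ z) (hμ1 : ∑ z, μ z = 1) {θ : ℝ}
    (hθ0 : 0 ≤ θ) (hθ1 : θ ≤ 1) (hθ : ∀ t ≠ 0, ‖charFn μ t‖ ≤ θ)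
    (W : Submodule (ZMod p) (ι → ZMod p)) {m : ℕ}
    (hW : ∀ w ∈ W, w ≠ 0 → m ≤ #{c | w c ≠ 0}) :
    prodWeight μ (orth W) ≤ (p : ℝ)⁻¹ ^ finrank (ZMod p) W + θ ^ m := by
  have hW0 : (Fintype.card W : ℝ) ≠ 0 := Nat.cast_ne_zero.2 Fintype.card_ne_zero
  calc prodWeight μ (orth W)
      ≤ (Fintype.card W : ℝ)⁻¹ * (1 + Fintype.card W * θ ^ m) := by
        refine (prodWeight_orth_le hμ0 W).trans ?_
        gcongr
        exact sum_prod_norm_charFn_le_of_le_card_support hμ0 hμ1 hθ0 hθ1 hθ W hW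
    _ = (p : ℝ)⁻¹ ^ finrank (ZMod p) W + θ ^ m := by
        rw [mul_add, mul_one, inv_mul_cancel_left₀ hW0, card_submodule_eq_pow_finrank,
          Nat.cast_pow, inv_pow]

lemma sum_prod_norm_charFn_le_pow_finrank (hμ0 : ∀ z, 0 ≤ μ z) (hμ1 : ∑ z, μ z = 1) {θ : ℝ}
    (hθ0 : 0 ≤ θ) (hθ : ∀ t ≠ 0, ‖charFn μ t‖ ≤ θ) (W : Submodule (ZMod p) (ι → ZMod p)) :
    ∑ w : W, ∏ c, ‖charFn μ ((w : ι → ZMod p) c)‖ ≤ (1 + (p - 1) * θ) ^ finrank (ZMod p) W := by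
  obtain ⟨s, hs, hdet⟩ := exists_determining_finset_card_le_finrank W
  let F : ZMod p → ℝ := fun t => if t = 0 then 1 else θ
  have hF0 (t : ZMod p) : 0 ≤ F t := by unfold F; split_ifs <;> positivity
  have hF (t : ZMod p) : ‖charFn μ t‖ ≤ F t := by
    unfold F
    split_ifs with ht
    · exact norm_charFn_le_one hμ0 hμ1 t
    · exact hθ t ht
  have hsumF : ∑ t, F t = 1 + (p - 1) * θ := by
    simp [F, sum_ite, filter_ne', filter_eq', ZMod.card, Nat.cast_sub (Fact.out : p.Prime).one_le]
  have hres : Injective fun (w : W) (c : s) => (w : ι → ZMod p) c := by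
    intro w w' h
    have := hdet _ (sub_mem w.2 w'.2) fun c hc => sub_eq_zero.2 (congrFun h ⟨c, hc⟩)
    exact Subtype.ext (sub_eq_zero.1 this)
  have hp1 : (1 : ℝ) ≤ p := by exact_mod_cast (Fact.out : p.Prime).one_lt.le
  calc ∑ w : W, ∏ c, ‖charFn μ ((w : ι → ZMod p) c)‖
      ≤ ∑ w : W, ∏ c ∈ s, F ((w : ι → ZMod p) c) := by
        gcongr with w
        exact (prod_le_prod_of_subset_of_le_one (subset_univ s) (fun _ _ => norm_nonneg _)
          fun _ _ _ => norm_charFn_le_one hμ0 hμ1 _).trans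
          (prod_le_prod (fun _ _ => norm_nonneg _) fun _ _ => hF _)
    _ ≤ (∑ t, F t) ^ #s := sum_prod_le_pow_card_of_injective hres hF0
    _ ≤ (1 + (p - 1) * θ) ^ finrank (ZMod p) W := by
        rw [hsumF]
        exact pow_le_pow_right₀ (by nlinarith) hs

lemma prodWeight_orth_le_pow_finrank (hμ0 : ∀ z, 0 ≤ μ z) (hμ1 : ∑ z, μ z = 1) {θ : ℝ}
    (hθ0 : 0 ≤ θ) (hθ : ∀ t ≠ 0, ‖charFn μ t‖ ≤ θ) (W : Submodule (ZMod p) (ι → ZMod p)) :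
    prodWeight μ (orth W) ≤ ((1 + (p - 1) * θ) / p) ^ finrank (ZMod p) W :=
  calc prodWeight μ (orth W)
      ≤ (Fintype.card W : ℝ)⁻¹ * (1 + (p - 1) * θ) ^ finrank (ZMod p) W := by
        refine (prodWeight_orth_le hμ0 W).trans ?_
        gcongr
        exact sum_prod_norm_charFn_le_pow_finrank hμ0 hμ1 hθ0 hθ W
    _ = ((1 + (p - 1) * θ) / p) ^ finrank (ZMod p) W := by
        rw [card_submodule_eq_pow_finrank, Nat.cast_pow, div_pow, inv_mul_eq_div]

end Fourier

section SparsePreimage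

variable {K ι m β : Type*} [Field K] [Fintype K] [DecidableEq K] [Fintype ι] [DecidableEq ι]
  [Fintype m]

def sparsePreimage (M : Matrix m ι K) (ℓ : ℕ) : Finset (ι → K) :=
  {x | #{a | (M *ᵥ x) a ≠ 0} ≤ ℓ}

variable {M : Matrix m ι K} {I : β → Finset m} {ℓ : ℕ}

lemma card_filter_notMem_orth_le (hI : Pairwise (Disjoint on I)) (C : Finset β)
    {x : ι → K} (hx : x ∈ sparsePreimage M ℓ) :
    #{i ∈ C | x ∉ orth (rowSpan M (I i))} ≤ ℓ := by
  refine (card_le_card_of_forall_exists_mem hI fun i hi => ?_).trans (mem_filter.1 hx).2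
  obtain ⟨a, ha, hMx⟩ : ∃ a ∈ I i, (M *ᵥ x) a ≠ 0 := by
    simpa [mem_orth_rowSpan_iff] using (mem_filter.1 hi).2
  exact ⟨a, ha, mem_filter.2 ⟨mem_univ a, hMx⟩⟩

lemma sparsePreimage_subset_biUnion_orth [DecidableEq m] (hI : Pairwise (Disjoint on I))
    {G : Finset β} (hℓG : ℓ ≤ #G) :
    sparsePreimage M ℓ ⊆
      (G.powersetCard ℓ).biUnion fun B => orth (rowSpan M ((G \ B).biUnion I)) := by
  intro x hx
  obtain ⟨B, hbad, hBG, hB⟩ :=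
    exists_subsuperset_card_eq (filter_subset _ G) (card_filter_notMem_orth_le hI G hx) hℓG
  refine mem_biUnion.2 ⟨B, mem_powersetCard.2 ⟨hBG, hB⟩, mem_orth_rowSpan_iff.2 fun a ha => ?_⟩
  obtain ⟨i, hi, hai⟩ := mem_biUnion.1 ha
  obtain ⟨hiG, hiB⟩ := mem_sdiff.1 hi
  have hgood : x ∈ orth (rowSpan M (I i)) := by
    by_contra hbad'
    exact hiB (hbad (mem_filter.2 ⟨hiG, hbad'⟩))
  exact mem_orth_rowSpan_iff.1 hgood a hai

end SparsePreimage

section Anticoncentration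

variable {ι β : Type*} [Fintype ι] [DecidableEq ι] {p : ℕ} [Fact p.Prime] {μ : ZMod p → ℝ}
  {θ : ℝ} {ℓ : ℕ}

lemma prodWeight_sparsePreimage_le_choose_mul_pow {m : Type*} [Fintype m] [DecidableEq m]
    {M : Matrix m ι (ZMod p)} {I : β → Finset m}
    (hμ0 : ∀ z, 0 ≤ μ z) (hμ1 : ∑ z, μ z = 1) (hθ0 : 0 ≤ θ) (hθ1 : θ ≤ 1)
    (hθ : ∀ t ≠ 0, ‖charFn μ t‖ ≤ θ) (hI : Pairwise (Disjoint on I)) {r : ℕ}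
    (hIcard : ∀ i, #(I i) ≤ r) {G : Finset β} {s : ℕ} (hℓG : ℓ ≤ #G)
    (hG : ℓ * r + s ≤ finrank (ZMod p) (rowSpan M (G.biUnion I))) :
    prodWeight μ (sparsePreimage M ℓ) ≤ (#G).choose ℓ * ((1 + (p - 1) * θ) / p) ^ s := by
  have hp : (1 : ℝ) ≤ p := by exact_mod_cast (Fact.out : p.Prime).one_lt.le
  have hρ0 : 0 ≤ (1 + (p - 1) * θ) / p := by positivity
  have hρ1 : (1 + (p - 1) * θ) / p ≤ 1 := by
    rw [div_le_one (by positivity)]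
    nlinarith
  calc prodWeight μ (sparsePreimage M ℓ)
      ≤ ∑ B ∈ G.powersetCard ℓ, prodWeight μ (orth (rowSpan M ((G \ B).biUnion I))) :=
        (prodWeight_mono hμ0 (sparsePreimage_subset_biUnion_orth hI hℓG)).trans
          (prodWeight_biUnion_le hμ0 _ _)
    _ ≤ ∑ B ∈ G.powersetCard ℓ, ((1 + (p - 1) * θ) / p) ^ s := by
        refine sum_le_sum fun B hB => ?_
        have hsB := finrank_rowSpan_biUnion_le (M := M) hIcard G B
        rw [(mem_powersetCard.1 hB).2] at hsB
        exact (prodWeight_orth_le_pow_finrank hμ0 hμ1 hθ0 hθ _).trans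
          (pow_le_pow_of_le_one hρ0 hρ1 (by omega))
    _ = (#G).choose ℓ * ((1 + (p - 1) * θ) / p) ^ s := by
        rw [sum_const, card_powersetCard, nsmul_eq_mul]

lemma prodWeight_sparsePreimage_le_of_rowSpan_eq {M : Matrix ι ι (ZMod p)}
    (hμ0 : ∀ z, 0 ≤ μ z) (hμ1 : ∑ z, μ z = 1) (hθ0 : 0 ≤ θ) (hθ1 : θ ≤ 1)
    (hθ : ∀ t ≠ 0, ‖charFn μ t‖ ≤ θ) {I : β → Finset ι} (hI : Pairwise (Disjoint on I))
    {C : Finset β} {r : ℕ}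
    (hrank : ∀ i ∈ C, (M.submatrix ((↑) : I i → ι) ((↑) : I i → ι)).rank = #(I i))
    (hcard : ∀ i ∈ C, #(I i) = r) {W₀ : Submodule (ZMod p) (ι → ZMod p)}
    (hW₀ : ∀ i ∈ C, rowSpan M (I i) = W₀) (hℓC : ℓ < #C) :
    prodWeight μ (sparsePreimage M ℓ) ≤ (p : ℝ)⁻¹ ^ r + θ ^ #C := by
  obtain ⟨i₀, hi₀⟩ := card_pos.1 (by omega : 0 < #C)
  have hfinrank : finrank (ZMod p) W₀ = r := by
    rw [← hW₀ i₀ hi₀, finrank_rowSpan_of_rank (hrank i₀ hi₀), hcard i₀ hi₀]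
  have hspread (w) (hw : w ∈ W₀) (hw0 : w ≠ 0) : #C ≤ #{c | w c ≠ 0} :=
    card_le_card_of_forall_exists_mem hI fun i hi => by
      obtain ⟨a, ha, hwa⟩ := exists_ne_zero_of_mem_rowSpan (hrank i hi) (hW₀ i hi ▸ hw) hw0
      exact ⟨a, ha, mem_filter.2 ⟨mem_univ a, hwa⟩⟩
  have hsub : sparsePreimage M ℓ ⊆ orth W₀ := fun x hx => by
    obtain ⟨i, hi, hgood⟩ := exists_mem_notMem_of_card_lt_card
      ((card_filter_notMem_orth_le hI C hx).trans_lt hℓC)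
    rw [← hW₀ i hi]
    by_contra hbad
    exact hgood (mem_filter.2 ⟨hi, hbad⟩)
  calc prodWeight μ (sparsePreimage M ℓ) ≤ prodWeight μ (orth W₀) := prodWeight_mono hμ0 hsub
    _ ≤ (p : ℝ)⁻¹ ^ r + θ ^ #C := by
        rw [← hfinrank]
        exact prodWeight_orth_le_of_le_card_support hμ0 hμ1 hθ0 hθ1 hθ W₀ hspread

end Anticoncentration

lemma exists_choose_mul_pow_le {ρ ε : ℝ} (hρ0 : 0 < ρ) (hρ1 : ρ < 1) (hε : 0 < ε) (a ℓ : ℕ) :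
    ∃ s, ℓ ≤ s ∧ ((a + s).choose ℓ : ℝ) * ρ ^ s ≤ ε := by
  have h := ((Filter.tendsto_add_atTop_iff_nat a).2
    (tendsto_pow_const_mul_const_pow_of_lt_one ℓ hρ0.le hρ1)).div_const (ρ ^ a)
  rw [zero_div] at h
  obtain ⟨s, hs, hℓs⟩ :=
    ((h.eventually (ge_mem_nhds hε)).and (Filter.eventually_ge_atTop ℓ)).exists
  refine ⟨s, hℓs, le_trans ?_ hs⟩
  calc ((a + s).choose ℓ : ℝ) * ρ ^ s ≤ ((s + a : ℕ) : ℝ) ^ ℓ * ρ ^ s := by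
        gcongr
        rw [add_comm]
        exact_mod_cast Nat.choose_le_pow _ _
    _ = _ := by
        rw [pow_add]
        field_simp

end HammingAnticoncentration

open HammingAnticoncentration

theorem robust_high_rank_hamming_anticoncentration_general (p : ℕ) [Fact p.Prime]
    (μ : ZMod p → ℝ) (hμ0 : ∀ z, 0 ≤ μ z) (hμ1 : ∑ z, μ z = 1)
    (hμsupp : ∃ a b : ZMod p, a ≠ b ∧ μ a ≠ 0 ∧ μ b ≠ 0)
    (r ℓ : ℕ) (ε : ℝ) (hε : 0 < ε) :
    ∃ D : ℕ, ∀ n : ℕ, 1 ≤ n →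
      ∀ M : Matrix (Fin n) (Fin n) (ZMod p),
      ∀ I : Fin D → Finset (Fin n),
        (∀ i, (I i).card = r) →
        (∀ i j, i ≠ j → Disjoint (I i) (I j)) →
        (∀ i, (M.submatrix (fun a : ↥(I i) => (a : Fin n))
            (fun a : ↥(I i) => (a : Fin n))).rank = r) →
        (∑ x ∈ Finset.univ.filter
            (fun x : Fin n → ZMod p =>
              (Finset.univ.filter (fun i : Fin n => M.mulVec x i ≠ 0)).card ≤ ℓ),
            ∏ i, μ (x i))
          ≤ 2 * ((p : ℝ))⁻¹ ^ r + ε := by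
  obtain ⟨θ, hθ0, hθ1, hθ⟩ := exists_norm_charFn_le_lt_one hμ0 hμ1 hμsupp
  have hp : (1 : ℝ) < p := by exact_mod_cast (Fact.out : p.Prime).one_lt
  obtain ⟨s, hℓs, hs⟩ := exists_choose_mul_pow_le (ρ := (1 + (p - 1) * θ) / p)
    (by positivity) (by rw [div_lt_one (by positivity)]; nlinarith) hε (ℓ * r) ℓ
  obtain ⟨k, hk, hℓk⟩ := (((tendsto_pow_atTop_nhds_zero_of_lt_one hθ0 hθ1).eventually
    (ge_mem_nhds (by positivity : (0 : ℝ) < (p : ℝ)⁻¹ ^ r))).and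
    (Filter.eventually_gt_atTop ℓ)).exists
  refine ⟨ℓ * r + s + 2 ^ p ^ (ℓ * r + s) * k, fun n _ M I hIcard hIdisj hIrank => ?_⟩
  have hI : Pairwise (Disjoint on I) := fun i j hij => hIdisj i j hij
  have hpr : (0 : ℝ) ≤ (p : ℝ)⁻¹ ^ r := by positivity
  change prodWeight μ (sparsePreimage M ℓ) ≤ _
  by_cases hU : ℓ * r + s ≤ finrank (ZMod p) (rowSpan M (univ.biUnion I))
  · obtain ⟨G, hG, hGrank⟩ := exists_card_eq_le_finrank_rowSpan_biUnion M I (by simp) hU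
    have hA := prodWeight_sparsePreimage_le_choose_mul_pow hμ0 hμ1 hθ0 hθ1.le hθ hI
      (fun i => (hIcard i).le) (by omega) hGrank
    rw [hG] at hA
    linarith
  · obtain ⟨W₀, hW₀⟩ := exists_le_card_fiber_of_forall_le (fun i => rowSpan M (I i))
      (fun i => rowSpan_mono M (subset_biUnion_of_mem I (mem_univ i))) (not_le.1 hU).le
      (k := k) (by simp [ZMod.card])
    have hB := prodWeight_sparsePreimage_le_of_rowSpan_eq (ℓ := ℓ) hμ0 hμ1 hθ0 hθ1.le hθ hI
      (C := {i | rowSpan M (I i) = W₀}) (fun i _ => (hIrank i).trans (hIcard i).symm)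
      (fun i _ => hIcard i) (fun i hi => (mem_filter.1 hi).2) (by omega)
    linarith [pow_le_pow_of_le_one hθ0 hθ1.le hW₀]

/-- For a prime `p ≥ 3`, a distribution `μ` on `F_p` supported on more than one value,
`r, ℓ ≥ 1` and `ε > 0`, there is `D ∈ ℕ` such that for all `n ≥ 1`: if `M` is an `n × n` matrix
over `F_p` and `I_1, …, I_D ⊆ {1,…,n}` are pairwise disjoint size-`r` sets with
`rank M[I_i × I_i] = r` for each `i`, then for a random vector `x` with independent
`μ`-distributed entries, the probability that `Mx` has at most `ℓ` nonzero entries is at most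
`2 p^{-r} + ε`. -/
theorem robust_high_rank_hamming_anticoncentration (p : ℕ) [Fact p.Prime] (hp3 : 3 ≤ p)
    (μ : ZMod p → ℝ) (hμ0 : ∀ z, 0 ≤ μ z) (hμ1 : ∑ z, μ z = 1)
    (hμsupp : ∃ a b : ZMod p, a ≠ b ∧ μ a ≠ 0 ∧ μ b ≠ 0)
    (r ℓ : ℕ) (hr : 1 ≤ r) (hℓ : 1 ≤ ℓ) (ε : ℝ) (hε : 0 < ε) :
    ∃ D : ℕ, ∀ n : ℕ, 1 ≤ n →
      ∀ M : Matrix (Fin n) (Fin n) (ZMod p),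
      ∀ I : Fin D → Finset (Fin n),
        (∀ i, (I i).card = r) →
        (∀ i j, i ≠ j → Disjoint (I i) (I j)) →
        (∀ i, (M.submatrix (fun a : ↥(I i) => (a : Fin n))
            (fun a : ↥(I i) => (a : Fin n))).rank = r) →
        (∑ x ∈ Finset.univ.filter
            (fun x : Fin n → ZMod p =>
              (Finset.univ.filter (fun i : Fin n => M.mulVec x i ≠ 0)).card ≤ ℓ),
            ∏ i, μ (x i))
          ≤ 2 * ((p : ℝ))⁻¹ ^ r + ε :=
  robust_high_rank_hamming_anticoncentration_general p μ hμ0 hμ1 hμsupp r ℓ ε hε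
end

section
/- Let p be a prime, let μ be a probability distribution on F_p, and let ρ = max_{z ∈ F_p} μ(z). Let x ∈ F_p^n be a random vector with independent μ-distributed entries. Then for any matrix M ∈ F_p^{m×n} and any vector z ∈ F_p^m, we have Pr[Mx = z] ≤ ρ^{rank M}. -/
/-!
Choose `rank M` linearly independent columns of `M`, indexed by `s`. Two solutions of `M x = z`
that agree off `s` differ by a vector supported on `s` in the kernel of `M`, so they coincide.
Hence the coordinates off `s` determine a solution, and summing the weight `∏ μ (x i)` first over
the coordinates in `s` (each factor at most `ρ`) and then over the rest (total mass at most one)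
gives `ρ ^ rank M`.
-/

open Finset

namespace Matrix

variable {m n K : Type*} [Field K]

theorem exists_finset_card_eq_rank_linearIndepOn_col [Fintype n] (A : Matrix m n K) :
    ∃ s : Finset n, s.card = A.rank ∧ LinearIndepOn K A.col (s : Set n) := by
  obtain ⟨b, -, -, hspan, hli⟩ :=
    exists_linearIndepOn_extension (linearIndepOn_empty K A.col) (Set.empty_subset Set.univ)
  classical
  refine ⟨b.toFinset, ?_, by simpa using hli⟩
  have hspan_eq : Submodule.span K (A.col '' b) = Submodule.span K (Set.range A.col) := by
    refine le_antisymm (Submodule.span_mono (Set.image_subset_range _ _)) ?_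
    rw [Submodule.span_le, ← Set.image_univ]
    exact hspan
  rw [rank_eq_finrank_span_cols, ← hspan_eq, Set.image_eq_range,
    finrank_span_eq_card hli.linearIndependent, Set.toFinset_card]

theorem mulVec_eq_sum_col {R : Type*} [CommSemiring R] [Fintype n] (A : Matrix m n R)
    (x : n → R) : A *ᵥ x = ∑ j, x j • A.col j := by
  ext i
  simp [mulVec, dotProduct, mul_comm]

theorem eq_of_mulVec_eq_of_eqOn_compl {R : Type*} [CommRing R] [Fintype n] {A : Matrix m n R}
    {s : Finset n} (hs : LinearIndepOn R A.col (s : Set n)) {x y : n → R}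
    (hxy : A *ᵥ x = A *ᵥ y) (hout : ∀ j ∉ s, x j = y j) : x = y := by
  have hsum : ∑ j ∈ s, (x - y) j • A.col j = 0 := by
    rw [Finset.sum_subset (subset_univ s) fun j _ hj => by simp [hout j hj],
      ← mulVec_eq_sum_col, mulVec_sub, hxy, sub_self]
  ext j
  by_cases hj : j ∈ s
  · exact sub_eq_zero.mp (linearIndepOn_finset_iff.mp hs _ hsum j hj)
  · exact hout j hj

end Matrix

theorem sum_prod_le_one_of_injOn_restrict {ι α : Type*} [Fintype α] {μ : α → ℝ}
    (hμ0 : ∀ a, 0 ≤ μ a) (hμ1 : ∑ a, μ a ≤ 1) {t : Finset ι} {S : Finset (ι → α)}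
    (hS : ∀ x ∈ S, ∀ y ∈ S, (∀ i ∈ t, x i = y i) → x = y) :
    ∑ x ∈ S, ∏ i ∈ t, μ (x i) ≤ 1 := by
  classical
  let restrict (x : ι → α) (i : t) : α := x i
  have hinj : Set.InjOn restrict S := fun x hx y hy hxy =>
    hS x hx y hy fun i hi => congrFun hxy ⟨i, hi⟩
  calc ∑ x ∈ S, ∏ i ∈ t, μ (x i) = ∑ y ∈ S.image restrict, ∏ i, μ (y i) := by
        rw [sum_image hinj]
        exact sum_congr rfl fun x _ => (prod_coe_sort t fun i => μ (x i)).symm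
    _ ≤ ∑ y : t → α, ∏ i, μ (y i) :=
        sum_le_univ_sum_of_nonneg fun y => prod_nonneg fun i _ => hμ0 _
    _ = (∑ a, μ a) ^ t.card := by
        rw [← Fintype.prod_sum, prod_const, card_univ, Fintype.card_coe]
    _ ≤ 1 := pow_le_one₀ (sum_nonneg fun a _ => hμ0 a) hμ1

theorem sum_prod_le_pow_card_of_injOn_restrict_compl {ι α : Type*} [Fintype ι] [DecidableEq ι]
    [Fintype α] {μ : α → ℝ} {ρ : ℝ} (hμ0 : ∀ a, 0 ≤ μ a) (hμ1 : ∑ a, μ a ≤ 1)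
    (hμρ : ∀ a, μ a ≤ ρ) (hρ : 0 ≤ ρ) {s : Finset ι} {S : Finset (ι → α)}
    (hS : ∀ x ∈ S, ∀ y ∈ S, (∀ i ∉ s, x i = y i) → x = y) :
    ∑ x ∈ S, ∏ i, μ (x i) ≤ ρ ^ s.card := by
  have hS' : ∀ x ∈ S, ∀ y ∈ S, (∀ i ∈ sᶜ, x i = y i) → x = y := fun x hx y hy h =>
    hS x hx y hy fun i hi => h i (mem_compl.mpr hi)
  calc ∑ x ∈ S, ∏ i, μ (x i)
        = ∑ x ∈ S, (∏ i ∈ s, μ (x i)) * ∏ i ∈ sᶜ, μ (x i) :=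
          sum_congr rfl fun x _ => (prod_mul_prod_compl s _).symm
    _ ≤ ∑ x ∈ S, ρ ^ s.card * ∏ i ∈ sᶜ, μ (x i) := by
        gcongr with x
        · exact prod_nonneg fun i _ => hμ0 _
        · exact (prod_le_prod (fun i _ => hμ0 _) fun i _ => hμρ _).trans_eq (prod_const ρ)
    _ = ρ ^ s.card * ∑ x ∈ S, ∏ i ∈ sᶜ, μ (x i) := (mul_sum _ _ _).symm
    _ ≤ ρ ^ s.card :=
        mul_le_of_le_one_right (pow_nonneg hρ _) (sum_prod_le_one_of_injOn_restrict hμ0 hμ1 hS')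

open scoped Classical

/-- For a prime `p`, a probability distribution `μ` on `F_p` with maximum point probability `ρ`,
and a random vector `x ∈ F_p^n` with independent `μ`-distributed entries: for any `m × n` matrix
`M` over `F_p` and any `z ∈ F_p^m`, `Pr[Mx = z] ≤ ρ^{rank M}`. -/
theorem anticoncentration_rank_bound (p : ℕ) [Fact p.Prime]
    (μ : ZMod p → ℝ) (hμ0 : ∀ z, 0 ≤ μ z) (hμ1 : ∑ z, μ z = 1)
    (ρ : ℝ) (hρ : IsGreatest (Set.range μ) ρ)
    (m n : ℕ) (M : Matrix (Fin m) (Fin n) (ZMod p)) (z : Fin m → ZMod p) :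
    (∑ x ∈ Finset.univ.filter (fun x : Fin n → ZMod p => M.mulVec x = z),
        ∏ i, μ (x i))
      ≤ ρ ^ M.rank := by
  obtain ⟨⟨a, rfl⟩, hμ_le⟩ := hρ
  obtain ⟨s, hcard, hs⟩ := M.exists_finset_card_eq_rank_linearIndepOn_col
  rw [← hcard]
  refine sum_prod_le_pow_card_of_injOn_restrict_compl hμ0 hμ1.le (fun w => hμ_le ⟨w, rfl⟩)
    (hμ0 a) fun x hx y hy hout => ?_
  rw [mem_filter] at hx hy
  exact Matrix.eq_of_mulVec_eq_of_eqOn_compl hs (hx.2.trans hy.2.symm) hout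
end
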